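/- arXiv:2402.08003 — 6 statements merged into one kernel-verified Lean document; each statement's English description precedes it below -/
import Mathlib

section
/- Fact 1 (quantum/Tsirelson bound, upper bound part): Let n, m ≥ 1, let A₀, A₁ be Hermitian n×n complex matrices and B₀, B₁ Hermitian m×m complex matrices satisfying A₀² ⪯ Iₙ, A₁² ⪯ Iₙ, B₀² ⪯ Iₘ, B₁² ⪯ Iₘ, and let ρ be a density matrix on ℂⁿ ⊗ ℂᵐ. Then for every a, b ∈ {0,1}, Tr[B̂_{a,b} ρ] ≤ 2. -/
/-!
Fact 1 (quantum/Tsirelson bound, upper bound part): for Hermitian observables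
`A₀, A₁` on `ℂⁿ` and `B₀, B₁` on `ℂᵐ` with squares `⪯ 1`, and any density matrix `ρ`
on `ℂⁿ ⊗ ℂᵐ`, the Bell operator `B̂_{a,b}` satisfies `Tr[B̂_{a,b} ρ] ≤ 2`.
-/

open Matrix Finset
open scoped Matrix Kronecker ComplexOrder

noncomputable section

/-- `tildeA A 0 = (A₀ - A₁)/√2` and `tildeA A 1 = (A₀ + A₁)/√2`. -/
def tildeA {n : Type*} (A : Fin 2 → Matrix n n ℂ) (j : Fin 2) : Matrix n n ℂ :=
  (Real.sqrt 2 : ℂ)⁻¹ • (A 0 + (-1 : ℂ) ^ ((j : ℕ) + 1) • A 1)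

/-- The Bell operator `B̂_{a,b} = (−1)^a (Ã₁ ⊗ B₁ + (−1)^b Ã₀ ⊗ B₀)`. -/
def BellOp {n m : Type*} (A : Fin 2 → Matrix n n ℂ) (B : Fin 2 → Matrix m m ℂ)
    (a b : Fin 2) : Matrix (n × m) (n × m) ℂ :=
  (-1 : ℂ) ^ (a : ℕ) • (tildeA A 1 ⊗ₖ B 1 + (-1 : ℂ) ^ (b : ℕ) • (tildeA A 0 ⊗ₖ B 0))

/-!
With `xᵢ = Aᵢ ⊗ 1` and `yⱼ = 1 ⊗ Bⱼ`, which commute, and `c = 1/√2`,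
`2 (2 - B̂₀₀) = Σᵢ (1 - xᵢ²) + Σⱼ (1 - yⱼ²) + (x₀ - c (y₀ + y₁))² + (x₁ - c (y₁ - y₀))²`
is a sum of positive operators, so `B̂₀₀ ⪯ 2`, and pairing with `ρ` gives `Tr[B̂₀₀ ρ] ≤ 2`.
The signs `a, b` are absorbed by replacing `(A₀, A₁)` with `±(A_b, A_{b+1})`.
-/

section StarOrderedAlgebra

variable {R : Type*} [Ring R] [PartialOrder R] [StarRing R] [StarOrderedRing R]
  [Algebra ℝ R] [IsOrderedModule ℝ R] [StarModule ℝ R]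

theorem tsirelson_inequality_of_sq_le_one {x₀ x₁ y₀ y₁ : R}
    (hx₀ : IsSelfAdjoint x₀) (hx₁ : IsSelfAdjoint x₁)
    (hy₀ : IsSelfAdjoint y₀) (hy₁ : IsSelfAdjoint y₁)
    (hx₀_sq : x₀ ^ 2 ≤ 1) (hx₁_sq : x₁ ^ 2 ≤ 1) (hy₀_sq : y₀ ^ 2 ≤ 1) (hy₁_sq : y₁ ^ 2 ≤ 1)
    (h₀₀ : Commute x₀ y₀) (h₀₁ : Commute x₀ y₁) (h₁₀ : Commute x₁ y₀) (h₁₁ : Commute x₁ y₁) :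
    ((√2)⁻¹ • (x₀ + x₁)) * y₁ + ((√2)⁻¹ • (x₀ - x₁)) * y₀ ≤ 2 := by
  set c : ℝ := (√2)⁻¹
  have hc : c * c = 2⁻¹ := TsirelsonInequality.sqrt_two_inv_mul_self
  clear_value c
  set P := x₀ - c • (y₀ + y₁)
  set Q := x₁ - c • (y₁ - y₀)
  have sos : (2 : ℝ) • (2 - ((c • (x₀ + x₁)) * y₁ + (c • (x₀ - x₁)) * y₀)) =
      (1 - x₀ ^ 2) + (1 - x₁ ^ 2) + (1 - y₀ ^ 2) + (1 - y₁ ^ 2) + P ^ 2 + Q ^ 2 := by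
    simp only [P, Q, sq, sub_mul, mul_sub, add_mul, mul_add, smul_mul_assoc, mul_smul_comm,
      ← h₀₀.eq, ← h₀₁.eq, ← h₁₀.eq, ← h₁₁.eq, ← one_add_one_eq_two (R := R)]
    match_scalars <;> linarith [hc]
  have hP : IsSelfAdjoint P := hx₀.sub ((IsSelfAdjoint.all c).smul (hy₀.add hy₁))
  have hQ : IsSelfAdjoint Q := hx₁.sub ((IsSelfAdjoint.all c).smul (hy₁.sub hy₀))
  have hsos_nonneg : 0 ≤ (2 : ℝ) • (2 - ((c • (x₀ + x₁)) * y₁ + (c • (x₀ - x₁)) * y₀)) := by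
    rw [sos]
    have := hP.sq_nonneg
    have := hQ.sq_nonneg
    have := sub_nonneg.2 hx₀_sq
    have := sub_nonneg.2 hx₁_sq
    have := sub_nonneg.2 hy₀_sq
    have := sub_nonneg.2 hy₁_sq
    positivity
  exact sub_nonneg.1 ((smul_nonneg_iff_nonneg_of_pos_left two_pos).1 hsos_nonneg)

end StarOrderedAlgebra

namespace Matrix

theorem sub_kronecker {α l p q r : Type*} [Ring α] (A₁ A₂ : Matrix l p α) (B : Matrix q r α) :
    (A₁ - A₂) ⊗ₖ B = A₁ ⊗ₖ B - A₂ ⊗ₖ B := by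
  ext; simp [sub_mul]

theorem kronecker_sub {α l p q r : Type*} [Ring α] (A : Matrix l p α) (B₁ B₂ : Matrix q r α) :
    A ⊗ₖ (B₁ - B₂) = A ⊗ₖ B₁ - A ⊗ₖ B₂ := by
  ext; simp [mul_sub]

theorem IsHermitian.kronecker {α l p : Type*} [CommMagma α] [StarMul α] {A : Matrix l l α}
    {B : Matrix p p α} (hA : A.IsHermitian) (hB : B.IsHermitian) : (A ⊗ₖ B).IsHermitian := by
  rw [IsHermitian, conjTranspose_kronecker, hA.eq, hB.eq]

variable {𝕜 n m : Type*} [RCLike 𝕜] [Fintype n] [Fintype m] [DecidableEq n] [DecidableEq m]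

theorem kronecker_one_mul_one_kronecker (A : Matrix n n 𝕜) (B : Matrix m m 𝕜) :
    (A ⊗ₖ (1 : Matrix m m 𝕜)) * ((1 : Matrix n n 𝕜) ⊗ₖ B) = A ⊗ₖ B := by
  rw [← mul_kronecker_mul, mul_one, one_mul]

theorem commute_kronecker_one_one_kronecker (A : Matrix n n 𝕜) (B : Matrix m m 𝕜) :
    Commute (A ⊗ₖ (1 : Matrix m m 𝕜)) ((1 : Matrix n n 𝕜) ⊗ₖ B) := by
  rw [Commute, SemiconjBy, kronecker_one_mul_one_kronecker, ← mul_kronecker_mul, mul_one,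
    one_mul]

open scoped MatrixOrder

theorem kronecker_one_sq_le_one {A : Matrix n n 𝕜} (hA : A ^ 2 ≤ 1) :
    (A ⊗ₖ (1 : Matrix m m 𝕜)) ^ 2 ≤ 1 := by
  rw [le_iff, sq, ← mul_kronecker_mul, mul_one, ← one_kronecker_one, ← sub_kronecker, ← sq]
  exact (le_iff.1 hA).kronecker PosSemidef.one

theorem one_kronecker_sq_le_one {B : Matrix m m 𝕜} (hB : B ^ 2 ≤ 1) :
    ((1 : Matrix n n 𝕜) ⊗ₖ B) ^ 2 ≤ 1 := by
  rw [le_iff, sq, ← mul_kronecker_mul, mul_one, ← one_kronecker_one, ← kronecker_sub, ← sq]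
  exact PosSemidef.one.kronecker (le_iff.1 hB)

theorem trace_mul_le_trace_mul_of_le {M N ρ : Matrix n n 𝕜} (hMN : M ≤ N) (hρ : ρ.PosSemidef) :
    (M * ρ).trace ≤ (N * ρ).trace := by
  obtain ⟨B, rfl⟩ := CStarAlgebra.nonneg_iff_eq_star_mul_self.mp hρ.nonneg
  have h : 0 ≤ ((N - M) * (star B * B)).trace := by
    rw [← mul_assoc, trace_mul_comm, ← mul_assoc, star_eq_conjTranspose]
    exact ((le_iff.1 hMN).mul_mul_conjTranspose_same B).trace_nonneg
  rwa [sub_mul, trace_sub, sub_nonneg] at h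

end Matrix

theorem tildeA_one {n : Type*} (A : Fin 2 → Matrix n n ℂ) :
    tildeA A 1 = (√2)⁻¹ • (A 0 + A 1) := by
  simp [tildeA, ← Complex.coe_smul]

theorem tildeA_zero {n : Type*} (A : Fin 2 → Matrix n n ℂ) :
    tildeA A 0 = (√2)⁻¹ • (A 0 - A 1) := by
  simp [tildeA, ← Complex.coe_smul, sub_eq_add_neg]

theorem bellOp_eq_bellOp_zero_zero {n m : Type*} (A : Fin 2 → Matrix n n ℂ)
    (B : Fin 2 → Matrix m m ℂ) (a b : Fin 2) :
    BellOp A B a b = BellOp (fun x => (-1 : ℂ) ^ (a : ℕ) • A (x + b)) B 0 0 := by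
  fin_cases a <;> fin_cases b <;> ext <;> simp [BellOp, tildeA] <;> ring

section BellOperator

variable {n m : Type*} [Fintype n] [Fintype m] [DecidableEq n] [DecidableEq m]

theorem bellOp_zero_zero_eq (A : Fin 2 → Matrix n n ℂ) (B : Fin 2 → Matrix m m ℂ) :
    BellOp A B 0 0 =
      ((√2)⁻¹ • (A 0 ⊗ₖ (1 : Matrix m m ℂ) + A 1 ⊗ₖ (1 : Matrix m m ℂ))) *
          ((1 : Matrix n n ℂ) ⊗ₖ B 1) +
        ((√2)⁻¹ • (A 0 ⊗ₖ (1 : Matrix m m ℂ) - A 1 ⊗ₖ (1 : Matrix m m ℂ))) *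
          ((1 : Matrix n n ℂ) ⊗ₖ B 0) := by
  simp only [BellOp, tildeA_one, tildeA_zero, ← add_kronecker, ← sub_kronecker, ← smul_kronecker,
    kronecker_one_mul_one_kronecker]
  simp

open scoped MatrixOrder in
theorem trace_bellOp_zero_zero_mul_le {A : Fin 2 → Matrix n n ℂ} {B : Fin 2 → Matrix m m ℂ}
    (hA : ∀ x, (A x).IsHermitian) (hB : ∀ x, (B x).IsHermitian)
    (hA_sq : ∀ x, A x ^ 2 ≤ 1) (hB_sq : ∀ x, B x ^ 2 ≤ 1)
    {ρ : Matrix (n × m) (n × m) ℂ} (hρ : ρ.PosSemidef) (hρ_trace : ρ.trace = 1) :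
    (BellOp A B 0 0 * ρ).trace ≤ 2 := by
  have hx (x) := ((hA x).kronecker (isHermitian_one (n := m))).isSelfAdjoint
  have hy (x) := ((isHermitian_one (n := n)).kronecker (hB x)).isSelfAdjoint
  have hcomm := commute_kronecker_one_one_kronecker (m := m) (n := n) (𝕜 := ℂ)
  have hle : BellOp A B 0 0 ≤ 2 := by
    rw [bellOp_zero_zero_eq]
    exact tsirelson_inequality_of_sq_le_one (hx 0) (hx 1) (hy 0) (hy 1)
      (kronecker_one_sq_le_one (hA_sq 0)) (kronecker_one_sq_le_one (hA_sq 1))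
      (one_kronecker_sq_le_one (hB_sq 0)) (one_kronecker_sq_le_one (hB_sq 1))
      (hcomm _ _) (hcomm _ _) (hcomm _ _) (hcomm _ _)
  calc (BellOp A B 0 0 * ρ).trace ≤ (2 * ρ).trace := trace_mul_le_trace_mul_of_le hle hρ
    _ = 2 := by rw [two_mul, trace_add, hρ_trace, one_add_one_eq_two]

end BellOperator

theorem quantum_bound_two_party_general (n m : ℕ)
    (A : Fin 2 → Matrix (Fin n) (Fin n) ℂ) (B : Fin 2 → Matrix (Fin m) (Fin m) ℂ)
    (hAh : ∀ x, (A x).IsHermitian) (hBh : ∀ x, (B x).IsHermitian)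
    (hA1 : ∀ x, ((1 : Matrix (Fin n) (Fin n) ℂ) - A x ^ 2).PosSemidef)
    (hB1 : ∀ x, ((1 : Matrix (Fin m) (Fin m) ℂ) - B x ^ 2).PosSemidef)
    (ρ : Matrix (Fin n × Fin m) (Fin n × Fin m) ℂ)
    (hρ : ρ.PosSemidef) (hρtr : ρ.trace = 1)
    (a b : Fin 2) :
    (BellOp A B a b * ρ).trace ≤ 2 := by
  rw [bellOp_eq_bellOp_zero_zero]
  refine trace_bellOp_zero_zero_mul_le (fun x => ?_) hBh (fun x => ?_) hB1 hρ hρtr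
  · exact (hAh _).smul ((IsSelfAdjoint.one ℂ).neg.pow _)
  · rw [smul_pow, ← pow_mul, pow_mul', neg_one_sq, one_pow, one_smul]
    exact hA1 _

theorem quantum_bound_two_party (n m : ℕ) (hn : 1 ≤ n) (hm : 1 ≤ m)
    (A : Fin 2 → Matrix (Fin n) (Fin n) ℂ) (B : Fin 2 → Matrix (Fin m) (Fin m) ℂ)
    (hAh : ∀ x, (A x).IsHermitian) (hBh : ∀ x, (B x).IsHermitian)
    (hA1 : ∀ x, ((1 : Matrix (Fin n) (Fin n) ℂ) - A x ^ 2).PosSemidef)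
    (hB1 : ∀ x, ((1 : Matrix (Fin m) (Fin m) ℂ) - B x ^ 2).PosSemidef)
    (ρ : Matrix (Fin n × Fin m) (Fin n × Fin m) ℂ)
    (hρ : ρ.PosSemidef) (hρtr : ρ.trace = 1)
    (a b : Fin 2) :
    (BellOp A B a b * ρ).trace ≤ 2 :=
  quantum_bound_two_party_general n m A B hAh hBh hA1 hB1 ρ hρ hρtr a b

end
end

section
/- Block-structure lemma for a unitary intertwining product states: Let d ≥ 1 and k₁, k₂ ≥ 1, let {e_j}_{j=1}^{d} and {f_j}_{j=1}^{d} be orthonormal bases of ℂ^d, let ξ be a positive-definite density matrix on ℂ^{k₁}, let τ_j be density matrices on ℂ^{k₂}, and let V : ℂ^d ⊗ ℂ^{k₁} → ℂ^d ⊗ ℂ^{k₂} be unitary (so in particular k₁ = k₂). If V (|e_j⟩⟨e_j| ⊗ ξ) V† = |f_j⟩⟨f_j| ⊗ τ_j for every j = 1, …, d, then there exist unitaries W_j : ℂ^{k₁} → ℂ^{k₂} such that V = Σ_{j=1}^{d} |f_j⟩⟨e_j| ⊗ W_j (and then τ_j = W_j ξ W_j†). -/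
/-!
After the change of basis by the unitaries whose columns are the `e j` and the `f j`, both bases
are standard. Cut `V` into `d × d` blocks `B i j : ℂ^{k₁} → ℂ^{k₂}`. The `(i, i)` block of
`V (E_jj ⊗ ξ) V†` is `B i j * ξ * (B i j)†`, which equals the `(i, i)` block of `E_jj ⊗ τ j`,
hence vanishes for `i ≠ j`; since `ξ` is positive definite this forces `B i j = 0`. So `V` is
block diagonal, its diagonal blocks `W j = B j j` are unitary because `V` is, and the `(j, j)`
block of the hypothesis reads `τ j = W j * ξ * (W j)†`.
-/

open Matrix Finset
open scoped Matrix Kronecker ComplexOrder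

namespace Matrix

section Blocks

variable {ι m n : Type*} [Fintype ι]

theorem submatrix_prodMk_mul {α : Type*} [NonUnitalNonAssocSemiring α] {o : Type*} [Fintype n]
    (M : Matrix (ι × m) (ι × n) α) (N : Matrix (ι × n) (ι × o) α) (i k : ι) :
    (M * N).submatrix (Prod.mk i) (Prod.mk k)
      = ∑ j, M.submatrix (Prod.mk i) (Prod.mk j) * N.submatrix (Prod.mk j) (Prod.mk k) := by
  ext a c
  simp [mul_apply, Fintype.sum_prod_type, Matrix.sum_apply]

omit [Fintype ι] in
theorem submatrix_prodMk_kronecker {α : Type*} [Mul α] {ι' : Type*} (A : Matrix ι ι' α)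
    (B : Matrix m n α) (i : ι) (j : ι') :
    (A ⊗ₖ B).submatrix (Prod.mk i) (Prod.mk j) = A i j • B := by
  ext a b
  simp

theorem eq_sum_single_kronecker_of_submatrix_prodMk_eq_zero {α : Type*} [Semiring α]
    [DecidableEq ι] (V : Matrix (ι × m) (ι × n) α)
    (hV : ∀ i j, i ≠ j → V.submatrix (Prod.mk i) (Prod.mk j) = 0) :
    V = ∑ j, single j j 1 ⊗ₖ V.submatrix (Prod.mk j) (Prod.mk j) := by
  ext ⟨i, a⟩ ⟨k, b⟩
  simp only [Matrix.sum_apply, kroneckerMap_apply, single_apply, ite_and, submatrix_apply,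
    ite_mul, one_mul, zero_mul, sum_ite_eq', mem_univ, ↓reduceIte]
  split_ifs with hik
  · rw [hik]
  · simpa using congrFun (congrFun (hV i k hik) a) b

theorem PosDef.eq_zero_of_mul_mul_conjTranspose_eq_zero {𝕜 : Type*} [RCLike 𝕜] [Fintype n]
    {ξ : Matrix n n 𝕜} (hξ : ξ.PosDef) {B : Matrix m n 𝕜} (h : B * ξ * Bᴴ = 0) : B = 0 := by
  ext a b
  have hrow : star (B a) = 0 := by
    by_contra hne
    have hdiag : star (star (B a)) ⬝ᵥ ξ *ᵥ star (B a) = (B * ξ * Bᴴ) a a := by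
      rw [star_star, dotProduct_mulVec, mul_apply']
      rfl
    have hpos := hξ.dotProduct_mulVec_pos hne
    rw [hdiag, h] at hpos
    exact hpos.ne rfl
  simpa using congrFun hrow b

theorem submatrix_prodMk_mul_single_kronecker_mul_conjTranspose {α : Type*} [CommSemiring α]
    [StarRing α] [DecidableEq ι] [Fintype m] [Fintype n]
    (V : Matrix (ι × m) (ι × n) α) (ξ : Matrix n n α) (i j : ι) :
    (V * (single j j 1 ⊗ₖ ξ) * Vᴴ).submatrix (Prod.mk i) (Prod.mk i)
      = V.submatrix (Prod.mk i) (Prod.mk j) * ξ * (V.submatrix (Prod.mk i) (Prod.mk j))ᴴ := by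
  ext a b
  simp [mul_apply, Fintype.sum_prod_type, single_apply, ite_and, Finset.sum_mul]

theorem exists_unitary_blocks_of_mul_single_kronecker_mul_conjTranspose {𝕜 : Type*} [RCLike 𝕜]
    [DecidableEq ι] [Fintype m] [DecidableEq m] [Fintype n] [DecidableEq n]
    {ξ : Matrix n n 𝕜} (hξ : ξ.PosDef) (τ : ι → Matrix m m 𝕜) (V : Matrix (ι × m) (ι × n) 𝕜)
    (hV : V * Vᴴ = 1 ∧ Vᴴ * V = 1)
    (h : ∀ j, V * (single j j 1 ⊗ₖ ξ) * Vᴴ = single j j 1 ⊗ₖ τ j) :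
    ∃ W : ι → Matrix m n 𝕜, (∀ j, W j * (W j)ᴴ = 1 ∧ (W j)ᴴ * W j = 1) ∧
      V = ∑ j, single j j 1 ⊗ₖ W j ∧ ∀ j, τ j = W j * ξ * (W j)ᴴ := by
  have hblock : ∀ i j, V.submatrix (Prod.mk i) (Prod.mk j) * ξ *
      (V.submatrix (Prod.mk i) (Prod.mk j))ᴴ = single j j (1 : 𝕜) i i • τ j := fun i j => by
    rw [← submatrix_prodMk_mul_single_kronecker_mul_conjTranspose, h, submatrix_prodMk_kronecker]
  have hoff : ∀ i j, i ≠ j → V.submatrix (Prod.mk i) (Prod.mk j) = 0 := fun i j hij =>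
    hξ.eq_zero_of_mul_mul_conjTranspose_eq_zero <| by
      rw [hblock, single_apply_of_row_ne hij.symm, zero_smul]
  refine ⟨fun j => V.submatrix (Prod.mk j) (Prod.mk j), fun j => ⟨?_, ?_⟩,
    eq_sum_single_kronecker_of_submatrix_prodMk_eq_zero V hoff,
    fun j => by rw [hblock, single_apply_same, one_smul]⟩
  · rw [conjTranspose_submatrix, ← submatrix_one _ (Prod.mk_right_injective j), ← hV.1,
      submatrix_prodMk_mul, sum_eq_single j
        (fun l _ hl => by rw [hoff j l hl.symm, Matrix.zero_mul]) (by simp)]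
  · rw [conjTranspose_submatrix, ← submatrix_one _ (Prod.mk_right_injective j), ← hV.2,
      submatrix_prodMk_mul, sum_eq_single j
        (fun l _ hl => by rw [hoff l j hl, Matrix.mul_zero]) (by simp)]

end Blocks

theorem transpose_of_mem_unitaryGroup {n R : Type*} [Fintype n] [DecidableEq n] [CommRing R]
    [StarRing R] {e : n → n → R} (he : ∀ i j, star (e i) ⬝ᵥ e j = if i = j then 1 else 0) :
    (of e)ᵀ ∈ unitaryGroup n R := by
  rw [mem_unitaryGroup_iff']
  ext i j
  simpa [mul_apply, dotProduct, one_apply] using he i j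

theorem transpose_of_mul_single_mul_conjTranspose {n R : Type*} [Fintype n] [DecidableEq n]
    [CommSemiring R] [StarRing R] (f e : n → n → R) (i j : n) :
    (of f)ᵀ * single i j 1 * (of e)ᵀᴴ = vecMulVec (f i) (star (e j)) := by
  ext a b
  simp [mul_apply, single_apply, vecMulVec_apply, ite_and]

theorem kronecker_one_mul_kronecker_mul_kronecker_one {α l m m' n p q : Type*} [CommSemiring α]
    [Fintype m] [Fintype m'] [Fintype p] [DecidableEq p] [Fintype q] [DecidableEq q]
    (A : Matrix l m α) (X : Matrix m m' α) (B : Matrix m' n α) (Y : Matrix p q α) :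
    (A ⊗ₖ (1 : Matrix p p α)) * (X ⊗ₖ Y) * (B ⊗ₖ (1 : Matrix q q α)) = (A * X * B) ⊗ₖ Y := by
  rw [← mul_kronecker_mul, ← mul_kronecker_mul, Matrix.one_mul, Matrix.mul_one]

theorem unitary_mul_mul_unitary {α m n : Type*} [CommRing α] [StarRing α] [Fintype m]
    [DecidableEq m] [Fintype n] [DecidableEq n] {A : Matrix m m α} {B : Matrix n n α}
    (hA : A ∈ unitaryGroup m α) (hB : B ∈ unitaryGroup n α) {V : Matrix m n α}
    (hV : V * Vᴴ = 1 ∧ Vᴴ * V = 1) :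
    A * V * B * (A * V * B)ᴴ = 1 ∧ (A * V * B)ᴴ * (A * V * B) = 1 := by
  obtain ⟨hA₁, hA₂⟩ := hA
  obtain ⟨hB₁, hB₂⟩ := hB
  simp only [star_eq_conjTranspose] at hA₁ hA₂ hB₁ hB₂
  simp only [conjTranspose_mul, Matrix.mul_assoc]
  constructor
  · rw [← Matrix.mul_assoc B, hB₂, Matrix.one_mul, ← Matrix.mul_assoc V, hV.1, Matrix.one_mul, hA₂]
  · rw [← Matrix.mul_assoc Aᴴ, hA₁, Matrix.one_mul, ← Matrix.mul_assoc Vᴴ, hV.2, Matrix.one_mul,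
      hB₁]

theorem exists_unitary_blocks_of_intertwining_unitary_conj_kronecker {ι m n 𝕜 : Type*}
    [Fintype ι] [DecidableEq ι] [Fintype m] [DecidableEq m] [Fintype n] [DecidableEq n] [RCLike 𝕜]
    {Ue Uf : Matrix ι ι 𝕜} (hUe : Ue ∈ unitaryGroup ι 𝕜) (hUf : Uf ∈ unitaryGroup ι 𝕜)
    {ξ : Matrix n n 𝕜} (hξ : ξ.PosDef) (τ : ι → Matrix m m 𝕜) (V : Matrix (ι × m) (ι × n) 𝕜)
    (hV : V * Vᴴ = 1 ∧ Vᴴ * V = 1)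
    (h : ∀ j, V * ((Ue * single j j 1 * Ueᴴ) ⊗ₖ ξ) * Vᴴ = (Uf * single j j 1 * Ufᴴ) ⊗ₖ τ j) :
    ∃ W : ι → Matrix m n 𝕜, (∀ j, W j * (W j)ᴴ = 1 ∧ (W j)ᴴ * W j = 1) ∧
      V = ∑ j, (Uf * single j j 1 * Ueᴴ) ⊗ₖ W j ∧ ∀ j, τ j = W j * ξ * (W j)ᴴ := by
  set Pe := Ue ⊗ₖ (1 : Matrix n n 𝕜)
  set Pf := Uf ⊗ₖ (1 : Matrix m m 𝕜)
  have hPe : Pe ∈ unitary _ := kronecker_mem_unitary hUe (one_mem _)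
  have hPf : Pf ∈ unitary _ := kronecker_mem_unitary hUf (one_mem _)
  have hUf₁ : Ufᴴ * Uf = 1 := Unitary.star_mul_self_of_mem hUf
  obtain ⟨W, hW, hV', hτ⟩ := exists_unitary_blocks_of_mul_single_kronecker_mul_conjTranspose hξ τ
    (Pfᴴ * V * Pe) (unitary_mul_mul_unitary (Unitary.star_mem hPf) hPe hV) fun j => by
      calc Pfᴴ * V * Pe * (single j j 1 ⊗ₖ ξ) * (Pfᴴ * V * Pe)ᴴ
          = Pfᴴ * (V * (Pe * (single j j 1 ⊗ₖ ξ) * Peᴴ) * Vᴴ) * Pf := by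
            simp only [conjTranspose_mul, conjTranspose_conjTranspose, Matrix.mul_assoc]
        _ = single j j 1 ⊗ₖ τ j := by
            simp only [Pe, Pf, conjTranspose_kronecker, conjTranspose_one,
              kronecker_one_mul_kronecker_mul_kronecker_one, h]
            simp only [Matrix.mul_assoc]
            rw [hUf₁, Matrix.mul_one, ← Matrix.mul_assoc, hUf₁, Matrix.one_mul]
  refine ⟨W, hW, ?_, hτ⟩
  calc V = Pf * (Pfᴴ * V * Pe) * Peᴴ := by
        simp only [Matrix.mul_assoc, ← star_eq_conjTranspose, Unitary.mul_star_self_of_mem hPe,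
          Matrix.mul_one, ← Matrix.mul_assoc Pf, Unitary.mul_star_self_of_mem hPf, Matrix.one_mul]
    _ = ∑ j, (Uf * single j j 1 * Ueᴴ) ⊗ₖ W j := by
      rw [hV', Matrix.mul_sum, Matrix.sum_mul]
      simp only [Pe, Pf, conjTranspose_kronecker, conjTranspose_one,
        kronecker_one_mul_kronecker_mul_kronecker_one]

end Matrix

theorem block_structure_lemma_general (d k₁ k₂ : ℕ)
    (e f : Fin d → Fin d → ℂ)
    (he : ∀ i j, star (e i) ⬝ᵥ e j = if i = j then 1 else 0)
    (hf : ∀ i j, star (f i) ⬝ᵥ f j = if i = j then 1 else 0)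
    (ξ : Matrix (Fin k₁) (Fin k₁) ℂ) (hξ : ξ.PosDef)
    (τ : Fin d → Matrix (Fin k₂) (Fin k₂) ℂ)
    (V : Matrix (Fin d × Fin k₂) (Fin d × Fin k₁) ℂ)
    (hV : V * Vᴴ = 1 ∧ Vᴴ * V = 1)
    (hint : ∀ j, V * ((vecMulVec (e j) (star (e j))) ⊗ₖ ξ) * Vᴴ
        = (vecMulVec (f j) (star (f j))) ⊗ₖ τ j) :
    ∃ W : Fin d → Matrix (Fin k₂) (Fin k₁) ℂ,
      (∀ j, W j * (W j)ᴴ = 1 ∧ (W j)ᴴ * W j = 1) ∧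
      V = ∑ j, (vecMulVec (f j) (star (e j))) ⊗ₖ W j ∧
      ∀ j, τ j = W j * ξ * (W j)ᴴ := by
  obtain ⟨W, hW, hVW, hτW⟩ := exists_unitary_blocks_of_intertwining_unitary_conj_kronecker
    (transpose_of_mem_unitaryGroup he) (transpose_of_mem_unitaryGroup hf) hξ τ V hV
    (by simpa only [transpose_of_mul_single_mul_conjTranspose] using hint)
  exact ⟨W, hW, by simpa only [transpose_of_mul_single_mul_conjTranspose] using hVW, hτW⟩

theorem block_structure_lemma (d k₁ k₂ : ℕ) (hd : 1 ≤ d) (hk₁ : 1 ≤ k₁) (hk₂ : 1 ≤ k₂)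
    (e f : Fin d → Fin d → ℂ)
    (he : ∀ i j, star (e i) ⬝ᵥ e j = if i = j then 1 else 0)
    (hf : ∀ i j, star (f i) ⬝ᵥ f j = if i = j then 1 else 0)
    (ξ : Matrix (Fin k₁) (Fin k₁) ℂ) (hξ : ξ.PosDef) (hξtr : ξ.trace = 1)
    (τ : Fin d → Matrix (Fin k₂) (Fin k₂) ℂ)
    (hτ : ∀ j, (τ j).PosSemidef ∧ (τ j).trace = 1)
    (V : Matrix (Fin d × Fin k₂) (Fin d × Fin k₁) ℂ)
    (hV : V * Vᴴ = 1 ∧ Vᴴ * V = 1)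
    (hint : ∀ j, V * ((vecMulVec (e j) (star (e j))) ⊗ₖ ξ) * Vᴴ
        = (vecMulVec (f j) (star (f j))) ⊗ₖ τ j) :
    ∃ W : Fin d → Matrix (Fin k₂) (Fin k₁) ℂ,
      (∀ j, W j * (W j)ᴴ = 1 ∧ (W j)ᴴ * W j = 1) ∧
      V = ∑ j, (vecMulVec (f j) (star (e j))) ⊗ₖ W j ∧
      ∀ j, τ j = W j * ξ * (W j)ᴴ :=
  block_structure_lemma_general d k₁ k₂ e f he hf ξ hξ τ V hV hint
end

section
/- Fact 2 (N-party quantum bound, upper bound part): Let N ≥ 2, let A_{1,0}, A_{1,1} be Hermitian matrices on ℂ^{d₁} and A_{n,0}, A_{n,1} Hermitian matrices on ℂ^{d_n} (n = 2,…,N), all with squares ⪯ identity, and let ρ be a density matrix on ℂ^{d₁} ⊗ ⋯ ⊗ ℂ^{d_N}. Then for every a ∈ {0,1}^N, Tr[B̂_a ρ] ≤ 2(N−1). -/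
/-! Fact 2 (N-party quantum bound, upper bound part): `Tr[B̂_a ρ] ≤ 2(N−1)`. -/

open Matrix Finset
open scoped Matrix Kronecker ComplexOrder

noncomputable section

def PauliX : Matrix (Fin 2) (Fin 2) ℂ := !![0, 1; 1, 0]

def PauliZ : Matrix (Fin 2) (Fin 2) ℂ := !![1, 0; 0, -1]

/-- Kronecker product of a family of matrices, on index `Π n, p n`. -/
def famKron {N : ℕ} {p q : Fin N → Type*} (M : ∀ n, Matrix (p n) (q n) ℂ) :
    Matrix (∀ n, p n) (∀ n, q n) ℂ :=
  Matrix.of fun s t => ∏ n, M n (s n) (t n)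

/-- The N-party Bell operator
`B̂_a = (−1)^{a₁} [ (N−1) Ã_{1,1} ⊗ A_{2,1} ⊗ ⋯ ⊗ A_{N,1}
        + Σ_{n=2}^N (−1)^{a_n} Ã_{1,0} ⊗ A_{n,0}^{(n)} ]`,
where party `n` of the paper corresponds to index `n−1 : Fin N`. -/
def NBell {N : ℕ} [NeZero N] {d : Fin N → ℕ}
    (A : ∀ n, Fin 2 → Matrix (Fin (d n)) (Fin (d n)) ℂ) (a : Fin N → Fin 2) :
    Matrix (∀ n, Fin (d n)) (∀ n, Fin (d n)) ℂ :=
  (-1 : ℂ) ^ (a 0 : ℕ) •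
    (((N : ℂ) - 1) • famKron (Function.update (fun n => A n 1) 0 (tildeA (A 0) 1)) +
      ∑ n ∈ Finset.univ.erase 0, (-1 : ℂ) ^ (a n : ℕ) •
        famKron (Function.update
          (Function.update (fun m => (1 : Matrix (Fin (d m)) (Fin (d m)) ℂ))
            0 (tildeA (A 0) 0)) n (A n 0)))

/-- The GHZ-like state `|φ_a⟩ = (|a₁ … a_N⟩ + (−1)^{a₁} |1−a₁ … 1−a_N⟩)/√2`. -/
def ghz {N : ℕ} [NeZero N] (a : Fin N → Fin 2) : (Fin N → Fin 2) → ℂ := fun s =>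
  (Real.sqrt 2 : ℂ)⁻¹ *
    ((if s = a then 1 else 0) +
      (-1 : ℂ) ^ (a 0 : ℕ) * (if s = (fun n => a n + 1) then 1 else 0))

/-! For a party `n ≥ 2`, the two terms of `B̂_a` that involve it are `z k` and `x l` with
self-adjoint `z = ±Ã₁₁ ⊗ 1`, `k = 1 ⊗ A_{2,1} ⊗ ⋯ ⊗ A_{N,1}`, `x = ±Ã₁₀ ⊗ 1`, `l = A_{n,0}^{(n)}`,
where `z` commutes with `k` and `x` with `l`. From `(z - k)² ⪰ 0` and `(x - l)² ⪰ 0`,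
`2 (z k + x l) ⪯ z² + x² + k² + l² ⪯ 4`, because `Ã₁₁² + Ã₁₀² = A₁₀² + A₁₁² ⪯ 2` and
`k², l² ⪯ 1` (a Kronecker product of operators between `0` and `1` lies between `0` and `1`).
Summing over the `N - 1` parties gives `B̂_a ⪯ 2 (N - 1)` in the Loewner order; pairing with the
density matrix `ρ` gives the bound. -/

open scoped MatrixOrder

theorem IsSelfAdjoint.mul_add_mul_le_mul_self_add_mul_self {R : Type*} [NonUnitalRing R]
    [StarRing R] [PartialOrder R] [StarOrderedRing R] {x y : R}
    (hx : IsSelfAdjoint x) (hy : IsSelfAdjoint y) : x * y + y * x ≤ x * x + y * y := by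
  have h := star_mul_self_nonneg (x - y)
  rw [star_sub, hx.star_eq, hy.star_eq] at h
  rw [← sub_nonneg]
  convert h using 1
  noncomm_ring

theorem IsSelfAdjoint.mul_add_mul_add_mul_add_mul_le_four {R : Type*} [Ring R] [StarRing R]
    [PartialOrder R] [StarOrderedRing R] {z k x l : R} (hz : IsSelfAdjoint z)
    (hk : IsSelfAdjoint k) (hx : IsSelfAdjoint x) (hl : IsSelfAdjoint l)
    (hzx : z * z + x * x ≤ 2) (hk1 : k * k ≤ 1) (hl1 : l * l ≤ 1) :
    z * k + k * z + (x * l + l * x) ≤ 4 :=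
  calc z * k + k * z + (x * l + l * x)
      ≤ z * z + k * k + (x * x + l * l) :=
        add_le_add (hz.mul_add_mul_le_mul_self_add_mul_self hk)
          (hx.mul_add_mul_le_mul_self_add_mul_self hl)
    _ = (z * z + x * x) + k * k + l * l := by abel
    _ ≤ 2 + 1 + 1 := by gcongr
    _ = 4 := by norm_num

namespace Matrix

variable {𝕜 n : Type*} [RCLike 𝕜] [Fintype n] [DecidableEq n]

omit [Fintype n] [DecidableEq n] in
theorem le_of_add_self_le {A B : Matrix n n 𝕜} (h : A + A ≤ B + B) : A ≤ B := by
  rw [le_iff] at h ⊢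
  convert h.smul (a := (2⁻¹ : 𝕜)) (by positivity) using 1
  module

theorem trace_mul_nonneg {P ρ : Matrix n n 𝕜} (hP : 0 ≤ P) (hρ : 0 ≤ ρ) :
    0 ≤ (P * ρ).trace := by
  obtain ⟨C, rfl⟩ := CStarAlgebra.nonneg_iff_eq_star_mul_self.mp hP
  rw [Matrix.mul_assoc, trace_mul_comm, star_eq_conjTranspose]
  exact (hρ.posSemidef.mul_mul_conjTranspose_same C).trace_nonneg

theorem trace_mul_le_trace_mul {A B ρ : Matrix n n 𝕜} (h : A ≤ B) (hρ : 0 ≤ ρ) :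
    (A * ρ).trace ≤ (B * ρ).trace := by
  rw [← sub_nonneg, ← trace_sub, ← Matrix.sub_mul]
  exact trace_mul_nonneg (sub_nonneg.mpr h) hρ

end Matrix

section famKron

variable {N : ℕ} {p q r : Fin N → Type*}

theorem famKron_mul [∀ n, Fintype (q n)] (M : ∀ n, Matrix (p n) (q n) ℂ)
    (M' : ∀ n, Matrix (q n) (r n) ℂ) :
    famKron M * famKron M' = famKron fun n => M n * M' n := by
  ext s t
  simp only [famKron, mul_apply, of_apply, ← prod_mul_distrib, prod_univ_sum,
    Fintype.piFinset_univ]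

theorem famKron_conjTranspose (M : ∀ n, Matrix (p n) (q n) ℂ) :
    (famKron M)ᴴ = famKron fun n => (M n)ᴴ := by
  ext s t
  simp [famKron, star_prod]

theorem famKron_update_add (F : ∀ n, Matrix (p n) (q n) ℂ) (k : Fin N)
    (X Y : Matrix (p k) (q k) ℂ) :
    famKron (Function.update F k (X + Y)) =
      famKron (Function.update F k X) + famKron (Function.update F k Y) := by
  ext s t
  simp only [famKron, of_apply, Matrix.add_apply,
    Function.apply_update (fun n (M : Matrix (p n) (q n) ℂ) => M (s n) (t n)),
    prod_update_of_mem (mem_univ k), add_mul]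

theorem famKron_isHermitian {M : ∀ n, Matrix (p n) (p n) ℂ} (h : ∀ n, (M n).IsHermitian) :
    (famKron M).IsHermitian := by
  rw [IsHermitian, famKron_conjTranspose]
  exact congrArg famKron (funext fun n => (h n).eq)

theorem famKron_one [∀ n, DecidableEq (p n)] :
    famKron (fun n => (1 : Matrix (p n) (p n) ℂ)) = 1 := by
  ext s t
  simp [famKron, one_apply, prod_boole, funext_iff]

theorem famKron_mul_eq [∀ n, Fintype (p n)] {M M' M'' : ∀ n, Matrix (p n) (p n) ℂ}
    (h : ∀ n, M n * M' n = M'' n) : famKron M * famKron M' = famKron M'' := by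
  rw [famKron_mul]
  exact congrArg famKron (funext h)

theorem famKron_update_isHermitian {F : ∀ n, Matrix (p n) (p n) ℂ} {k : Fin N}
    {Y : Matrix (p k) (p k) ℂ} (hF : ∀ n, (F n).IsHermitian) (hY : Y.IsHermitian) :
    (famKron (Function.update F k Y)).IsHermitian :=
  famKron_isHermitian <|
    (Function.forall_update_iff F fun _ M => IsHermitian M).mpr ⟨hY, fun n _ => hF n⟩

variable [∀ n, Fintype (p n)] [∀ n, DecidableEq (p n)]

theorem famKron_nonneg {M : ∀ n, Matrix (p n) (p n) ℂ} (h : ∀ n, 0 ≤ M n) :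
    0 ≤ famKron M := by
  choose B hB using fun n => CStarAlgebra.nonneg_iff_eq_star_mul_self.mp (h n)
  have : famKron M = (famKron B)ᴴ * famKron B := by
    rw [famKron_conjTranspose, famKron_mul]
    exact congrArg famKron (funext hB)
  rw [this]
  exact star_mul_self_nonneg _

theorem famKron_update_mono {F : ∀ n, Matrix (p n) (p n) ℂ} {k : Fin N}
    (hF : ∀ n ≠ k, 0 ≤ F n) {X Y : Matrix (p k) (p k) ℂ} (h : X ≤ Y) :
    famKron (Function.update F k X) ≤ famKron (Function.update F k Y) := by
  rw [← add_sub_cancel X Y, famKron_update_add]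
  refine le_add_of_nonneg_right (famKron_nonneg ?_)
  exact (Function.forall_update_iff F fun _ M => 0 ≤ M).mpr ⟨sub_nonneg.mpr h, hF⟩

theorem famKron_mono {M M' : ∀ n, Matrix (p n) (p n) ℂ} (h0 : ∀ n, 0 ≤ M n)
    (h : ∀ n, M n ≤ M' n) : famKron M ≤ famKron M' := by
  classical
  suffices ∀ s : Finset (Fin N), famKron M ≤ famKron (s.piecewise M' M) by
    simpa using this univ
  intro s
  induction s using Finset.induction_on with
  | empty => simp
  | insert k s hk ih =>
    refine ih.trans ?_
    rw [piecewise_insert, ← Function.update_eq_self k (s.piecewise M' M),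
      Function.update_idem, piecewise_eq_of_notMem _ _ _ hk]
    exact famKron_update_mono
      (fun n _ => s.piecewise_cases M' M (fun P => 0 ≤ P) ((h0 n).trans (h n)) (h0 n)) (h k)

theorem famKron_mul_self_le_one {M : ∀ n, Matrix (p n) (p n) ℂ}
    (hM : ∀ n, (M n).IsHermitian) (h : ∀ n, M n * M n ≤ 1) :
    famKron M * famKron M ≤ 1 := by
  rw [famKron_mul, ← famKron_one]
  exact famKron_mono (fun n => (hM n).isSelfAdjoint.mul_self_nonneg) h

theorem famKron_update_mul_self_le_one {F : ∀ n, Matrix (p n) (p n) ℂ} {k : Fin N}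
    {Y : Matrix (p k) (p k) ℂ} (hF : ∀ n, (F n).IsHermitian) (hF1 : ∀ n, F n * F n ≤ 1)
    (hY : Y.IsHermitian) (hY1 : Y * Y ≤ 1) :
    famKron (Function.update F k Y) * famKron (Function.update F k Y) ≤ 1 :=
  famKron_mul_self_le_one
    ((Function.forall_update_iff F fun _ M => IsHermitian M).mpr ⟨hY, fun n _ => hF n⟩)
    ((Function.forall_update_iff F fun _ M => M * M ≤ 1).mpr ⟨hY1, fun n _ => hF1 n⟩)

end famKron

section tildeA

variable {n : Type*}

theorem tildeA_isHermitian {A : Fin 2 → Matrix n n ℂ} (hA : ∀ x, (A x).IsHermitian) (j : Fin 2) :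
    (tildeA A j).IsHermitian := by
  simp [tildeA, IsHermitian, (hA 0).eq, (hA 1).eq, Complex.conj_ofReal]

theorem tildeA_mul_self_add_mul_self [Fintype n] (A : Fin 2 → Matrix n n ℂ) :
    tildeA A 1 * tildeA A 1 + tildeA A 0 * tildeA A 0 = A 0 * A 0 + A 1 * A 1 := by
  have hc : ((Real.sqrt 2 : ℂ))⁻¹ * ((Real.sqrt 2 : ℂ))⁻¹ = (2 : ℂ)⁻¹ := by
    rw [← mul_inv, ← Complex.ofReal_mul, Real.mul_self_sqrt zero_le_two]
    norm_num
  simp only [tildeA, Fin.isValue, Fin.val_one, Fin.val_zero, add_mul, mul_add, smul_mul_assoc,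
    mul_smul_comm]
  norm_num
  simp only [smul_smul, hc]
  module

end tildeA

section siteOp

variable {N : ℕ} {p : Fin N → Type*} [∀ n, Fintype (p n)] [∀ n, DecidableEq (p n)]

/-- The paper's `X^{(k)}`: `X` on the `k`-th tensor factor, the identity on the others. -/
def siteOp (k : Fin N) (X : Matrix (p k) (p k) ℂ) : Matrix (∀ n, p n) (∀ n, p n) ℂ :=
  famKron (Function.update (fun n => (1 : Matrix (p n) (p n) ℂ)) k X)

omit [∀ n, Fintype (p n)] in
theorem siteOp_one (k : Fin N) : siteOp k (1 : Matrix (p k) (p k) ℂ) = 1 := by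
  rw [siteOp, Function.update_eq_self_iff.mpr rfl, famKron_one]

omit [∀ n, Fintype (p n)] in
theorem siteOp_add (k : Fin N) (X Y : Matrix (p k) (p k) ℂ) :
    siteOp k (X + Y) = siteOp k X + siteOp k Y :=
  famKron_update_add _ k X Y

theorem siteOp_mul (k : Fin N) (X Y : Matrix (p k) (p k) ℂ) :
    siteOp k X * siteOp k Y = siteOp k (X * Y) :=
  famKron_mul_eq fun n => by rcases eq_or_ne n k with rfl | hn <;> simp [*]

theorem siteOp_mono {k : Fin N} {X Y : Matrix (p k) (p k) ℂ} (h : X ≤ Y) :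
    siteOp k X ≤ siteOp k Y :=
  famKron_update_mono (fun _ _ => PosSemidef.one.nonneg) h

theorem siteOp_mul_famKron_update_one (F : ∀ n, Matrix (p n) (p n) ℂ) (k : Fin N)
    (X : Matrix (p k) (p k) ℂ) :
    siteOp k X * famKron (Function.update F k 1) = famKron (Function.update F k X) :=
  famKron_mul_eq fun n => by rcases eq_or_ne n k with rfl | hn <;> simp [*]

theorem famKron_update_one_mul_siteOp (F : ∀ n, Matrix (p n) (p n) ℂ) (k : Fin N)
    (X : Matrix (p k) (p k) ℂ) :
    famKron (Function.update F k 1) * siteOp k X = famKron (Function.update F k X) :=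
  famKron_mul_eq fun n => by rcases eq_or_ne n k with rfl | hn <;> simp [*]

theorem siteOp_tildeA_mul_self_add_mul_self_le_two {k : Fin N} {B : Fin 2 → Matrix (p k) (p k) ℂ}
    (hB : ∀ x, B x * B x ≤ 1) :
    siteOp k (tildeA B 1) * siteOp k (tildeA B 1) + siteOp k (tildeA B 0) * siteOp k (tildeA B 0)
      ≤ 2 :=
  calc _ = siteOp k (B 0 * B 0 + B 1 * B 1) := by
        rw [siteOp_mul, siteOp_mul, ← siteOp_add, tildeA_mul_self_add_mul_self]
    _ ≤ siteOp k (1 + 1) := siteOp_mono (add_le_add (hB 0) (hB 1))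
    _ = 2 := by rw [siteOp_add, siteOp_one, one_add_one_eq_two]

end siteOp


theorem neg_one_pow_smul_mul_self {R : Type*} [Ring R] [Algebra ℂ R] (i : ℕ) (x : R) :
    ((-1 : ℂ) ^ i • x) * ((-1 : ℂ) ^ i • x) = x * x := by
  rw [smul_mul_smul_comm, ← mul_pow, neg_one_mul, neg_neg, one_pow, one_smul]

theorem Matrix.IsHermitian.neg_one_pow_smul {n : Type*} {M : Matrix n n ℂ} (hM : M.IsHermitian)
    (i : ℕ) : ((-1 : ℂ) ^ i • M).IsHermitian := by
  simp [IsHermitian, conjTranspose_smul, hM.eq]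

section Bell

variable {N : ℕ} [NeZero N] {d : Fin N → ℕ} (A : ∀ n, Fin 2 → Matrix (Fin (d n)) (Fin (d n)) ℂ)

/-- `Ã_{1,1} ⊗ A_{2,1} ⊗ ⋯ ⊗ A_{N,1}`; party `1` of the paper is the index `0`. -/
def fullCorrelator : Matrix (∀ n, Fin (d n)) (∀ n, Fin (d n)) ℂ :=
  famKron (Function.update (fun n => A n 1) 0 (tildeA (A 0) 1))

/-- `Ã_{1,0} ⊗ A_{n,0}^{(n)}`. -/
def pairCorrelator (n : Fin N) : Matrix (∀ n, Fin (d n)) (∀ n, Fin (d n)) ℂ :=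
  famKron (Function.update
    (Function.update (fun m => (1 : Matrix (Fin (d m)) (Fin (d m)) ℂ)) 0 (tildeA (A 0) 0))
    n (A n 0))

theorem cast_card_univ_erase_zero : ((univ.erase (0 : Fin N)).card : ℂ) = N - 1 := by
  rw [card_erase_of_mem (mem_univ 0), card_univ, Fintype.card_fin, Nat.cast_sub NeZero.one_le,
    Nat.cast_one]

theorem NBell_eq_sum (a : Fin N → Fin 2) :
    NBell A a = ∑ n ∈ univ.erase 0, ((-1 : ℂ) ^ (a 0 : ℕ) • fullCorrelator A +
      (-1 : ℂ) ^ ((a 0 : ℕ) + a n) • pairCorrelator A n) := by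
  rw [NBell, sum_add_distrib, sum_const, ← Nat.cast_smul_eq_nsmul ℂ, cast_card_univ_erase_zero,
    smul_add, smul_comm, smul_sum]
  simp only [smul_smul, pow_add, fullCorrelator, pairCorrelator]

theorem neg_one_pow_smul_fullCorrelator_add_smul_pairCorrelator_le_two
    (hAh : ∀ n x, (A n x).IsHermitian) (hAc : ∀ n x, A n x * A n x ≤ 1)
    {n : Fin N} (hn : n ≠ 0) (i j : ℕ) :
    (-1 : ℂ) ^ i • fullCorrelator A + (-1 : ℂ) ^ j • pairCorrelator A n ≤ 2 := by
  set Z : Matrix (∀ m, Fin (d m)) (∀ m, Fin (d m)) ℂ := siteOp 0 (tildeA (A 0) 1)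
  set X : Matrix (∀ m, Fin (d m)) (∀ m, Fin (d m)) ℂ := siteOp 0 (tildeA (A 0) 0)
  set K := famKron (Function.update (fun m => A m 1) 0 1)
  set L : Matrix (∀ m, Fin (d m)) (∀ m, Fin (d m)) ℂ := siteOp n (A n 0)
  have hX : X = famKron (Function.update
      (Function.update (fun m => (1 : Matrix (Fin (d m)) (Fin (d m)) ℂ)) 0 (tildeA (A 0) 0))
      n 1) := by
    rw [Function.update_eq_self_iff.mpr (Function.update_of_ne hn _ _).symm]
    rfl
  have hZK : Z * K = fullCorrelator A := siteOp_mul_famKron_update_one _ _ _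
  have hKZ : K * Z = fullCorrelator A := famKron_update_one_mul_siteOp _ _ _
  have hXL : X * L = pairCorrelator A n := by
    rw [hX]
    exact famKron_update_one_mul_siteOp _ _ _
  have hLX : L * X = pairCorrelator A n := by
    rw [hX]
    exact siteOp_mul_famKron_update_one _ _ _
  have hZh : Z.IsHermitian :=
    famKron_update_isHermitian (fun _ => isHermitian_one) (tildeA_isHermitian (hAh 0) 1)
  have hXh : X.IsHermitian :=
    famKron_update_isHermitian (fun _ => isHermitian_one) (tildeA_isHermitian (hAh 0) 0)
  have hKh : K.IsHermitian := famKron_update_isHermitian (fun m => hAh m 1) isHermitian_one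
  have hLh : L.IsHermitian := famKron_update_isHermitian (fun _ => isHermitian_one) (hAh n 0)
  have hKK : K * K ≤ 1 := famKron_update_mul_self_le_one (fun m => hAh m 1) (fun m => hAc m 1)
    isHermitian_one (mul_one _).le
  have hLL : L * L ≤ 1 := famKron_update_mul_self_le_one (fun _ => isHermitian_one)
    (fun _ => (mul_one _).le) (hAh n 0) (hAc n 0)
  have h := (hZh.neg_one_pow_smul i).isSelfAdjoint.mul_add_mul_add_mul_add_mul_le_four
    hKh.isSelfAdjoint (hXh.neg_one_pow_smul j).isSelfAdjoint hLh.isSelfAdjoint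
    (by simpa only [neg_one_pow_smul_mul_self] using
      siteOp_tildeA_mul_self_add_mul_self_le_two (hAc 0)) hKK hLL
  rw [smul_mul_assoc, mul_smul_comm, smul_mul_assoc, mul_smul_comm, hZK, hKZ, hXL, hLX] at h
  refine le_of_add_self_le ?_
  convert h using 1 <;> [abel; norm_num]

theorem NBell_le (hAh : ∀ n x, (A n x).IsHermitian) (hAc : ∀ n x, A n x * A n x ≤ 1)
    (a : Fin N → Fin 2) : NBell A a ≤ (2 * ((N : ℂ) - 1)) • 1 :=
  calc NBell A a
      ≤ ∑ _n ∈ univ.erase (0 : Fin N), (2 : Matrix (∀ n, Fin (d n)) (∀ n, Fin (d n)) ℂ) := by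
        rw [NBell_eq_sum]
        exact sum_le_sum fun n hn =>
          neg_one_pow_smul_fullCorrelator_add_smul_pairCorrelator_le_two A hAh hAc
            (ne_of_mem_erase hn) _ _
    _ = (2 * ((N : ℂ) - 1)) • 1 := by
        rw [sum_const, ← Nat.cast_smul_eq_nsmul ℂ, cast_card_univ_erase_zero, mul_comm,
          mul_smul, two_smul, one_add_one_eq_two]

end Bell

theorem quantum_bound_N_party_general (N : ℕ) [NeZero N] (d : Fin N → ℕ)
    (A : ∀ n, Fin 2 → Matrix (Fin (d n)) (Fin (d n)) ℂ)
    (hAh : ∀ n x, (A n x).IsHermitian)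
    (hAc : ∀ n x, ((1 : Matrix (Fin (d n)) (Fin (d n)) ℂ) - A n x ^ 2).PosSemidef)
    (ρ : Matrix (∀ n, Fin (d n)) (∀ n, Fin (d n)) ℂ)
    (hρ : ρ.PosSemidef) (hρtr : ρ.trace = 1)
    (a : Fin N → Fin 2) :
    (NBell A a * ρ).trace ≤ 2 * ((N : ℂ) - 1) := by
  have hA : ∀ n x, A n x * A n x ≤ 1 := fun n x => by
    rw [← sq]
    exact le_iff.mpr (hAc n x)
  calc (NBell A a * ρ).trace
      ≤ ((2 * ((N : ℂ) - 1)) • 1 * ρ).trace :=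
        trace_mul_le_trace_mul (NBell_le A hAh hA a) hρ.nonneg
    _ = 2 * ((N : ℂ) - 1) := by
        rw [smul_mul_assoc, Matrix.one_mul, trace_smul, hρtr, smul_eq_mul, mul_one]

theorem quantum_bound_N_party (N : ℕ) [NeZero N] (hN : 2 ≤ N) (d : Fin N → ℕ)
    (A : ∀ n, Fin 2 → Matrix (Fin (d n)) (Fin (d n)) ℂ)
    (hAh : ∀ n x, (A n x).IsHermitian)
    (hAc : ∀ n x, ((1 : Matrix (Fin (d n)) (Fin (d n)) ℂ) - A n x ^ 2).PosSemidef)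
    (ρ : Matrix (∀ n, Fin (d n)) (∀ n, Fin (d n)) ℂ)
    (hρ : ρ.PosSemidef) (hρtr : ρ.trace = 1)
    (a : Fin N → Fin 2) :
    (NBell A a * ρ).trace ≤ 2 * ((N : ℂ) - 1) :=
  quantum_bound_N_party_general N d A hAh hAc ρ hρ hρtr a

end
end

section
/- Fact 2 (achievability of the N-party quantum bound): Let N ≥ 2 and take the qubit observables A_{1,0} = (X+Z)/√2, A_{1,1} = (X−Z)/√2 and A_{n,0} = Z, A_{n,1} = X for n = 2,…,N. Then for every a ∈ {0,1}^N, the GHZ-like state |φ_a⟩ attains the value 2(N−1): ⟨φ_a| B̂_a |φ_a⟩ = 2(N−1). -/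
/-! Fact 2 (achievability): the GHZ-like state attains `⟨φ_a| B̂_a |φ_a⟩ = 2(N−1)` for the reference qubit observables. -/

open Matrix Finset
open scoped Matrix Kronecker ComplexOrder

noncomputable section

/- auxiliary lemmas -/

lemma sqrt2_mul' : ((Real.sqrt 2 : ℝ) : ℂ) * ((Real.sqrt 2 : ℝ) : ℂ) = 2 := by
  rw [← Complex.ofReal_mul, Real.mul_self_sqrt (by norm_num)]; norm_num
lemma inv_sqrt2_mul : ((Real.sqrt 2 : ℝ) : ℂ)⁻¹ * ((Real.sqrt 2 : ℝ) : ℂ)⁻¹ = 2⁻¹ := by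
  rw [← mul_inv, sqrt2_mul']
lemma inv_sqrt2_sq : ((Real.sqrt 2 : ℝ) : ℂ)⁻¹ ^ 2 = 2⁻¹ := by rw [sq, inv_sqrt2_mul]
lemma neg_one_pow_fin_sq (j : Fin 2) : (-1:ℂ)^(j:ℕ) * (-1:ℂ)^(j:ℕ) = 1 := by
  fin_cases j <;> norm_num

lemma hX_diag (i : Fin 2) : PauliX i i = 0 := by fin_cases i <;> simp [PauliX]
lemma hX_off (i : Fin 2) : PauliX i (i+1) = 1 := by fin_cases i <;> simp [PauliX]
lemma hX_off' (i : Fin 2) : PauliX (i+1) i = 1 := by fin_cases i <;> simp [PauliX]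
lemma hZ_diag (i : Fin 2) : PauliZ i i = (-1:ℂ)^(i:ℕ) := by fin_cases i <;> simp [PauliZ]
lemma hZ_diag' (i : Fin 2) : PauliZ (i+1) (i+1) = -(-1:ℂ)^(i:ℕ) := by
  fin_cases i <;> simp [PauliZ]
lemma hZ_off (i : Fin 2) : PauliZ i (i+1) = 0 := by fin_cases i <;> simp [PauliZ]
lemma hZ_off' (i : Fin 2) : PauliZ (i+1) i = 0 := by fin_cases i <;> simp [PauliZ]

lemma tildeA1 (A : Fin 2 → Matrix (Fin 2) (Fin 2) ℂ)
    (hA : A = ![(Real.sqrt 2 : ℂ)⁻¹ • (PauliX + PauliZ), (Real.sqrt 2 : ℂ)⁻¹ • (PauliX - PauliZ)]) :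
    tildeA A 1 = PauliX := by
  subst hA; ext i j
  simp [tildeA, Matrix.smul_apply, Matrix.add_apply, Matrix.sub_apply]
  ring_nf; rw [inv_sqrt2_sq]; ring

lemma tildeA0 (A : Fin 2 → Matrix (Fin 2) (Fin 2) ℂ)
    (hA : A = ![(Real.sqrt 2 : ℂ)⁻¹ • (PauliX + PauliZ), (Real.sqrt 2 : ℂ)⁻¹ • (PauliX - PauliZ)]) :
    tildeA A 0 = PauliZ := by
  subst hA; ext i j
  simp [tildeA, Matrix.smul_apply, Matrix.add_apply, Matrix.sub_apply]
  ring_nf; rw [inv_sqrt2_sq]; ring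

lemma ghz_star {N : ℕ} [NeZero N] (a : Fin N → Fin 2) : star (ghz a) = ghz a := by
  funext s
  simp only [Pi.star_apply, ghz, Complex.star_def, _root_.map_mul, map_add, map_pow, map_inv₀,
    Complex.conj_ofReal, map_neg, _root_.map_one, apply_ite (starRingEnd ℂ), map_zero]

lemma quad {N : ℕ} [NeZero N] (a : Fin N → Fin 2)
    (M : Matrix (Fin N → Fin 2) (Fin N → Fin 2) ℂ) :
    star (ghz a) ⬝ᵥ M *ᵥ ghz a =
      2⁻¹ * (M a a + (-1:ℂ)^(a 0 : ℕ) * M a (fun n => a n + 1)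
        + (-1:ℂ)^(a 0 : ℕ) * M (fun n => a n + 1) a + M (fun n => a n + 1) (fun n => a n + 1)) := by
  rw [ghz_star]
  have he := neg_one_pow_fin_sq (a 0)
  have hr := inv_sqrt2_mul
  set b : Fin N → Fin 2 := fun n => a n + 1 with hb
  set r : ℂ := ((Real.sqrt 2 : ℝ) : ℂ)⁻¹ with hrdef
  set e : ℂ := (-1:ℂ)^((a 0 : ℕ)) with hedef
  simp only [dotProduct, mulVec, ghz, dotProduct, ← hb, ← hrdef, ← hedef]
  simp only [mul_add, add_mul, mul_ite, ite_mul, mul_one, one_mul, mul_zero, zero_mul,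
    Finset.sum_add_distrib, Finset.sum_ite_eq', Finset.mem_univ, if_true]
  linear_combination (M a a + e * M a b + e * M b a + e * e * M b b) * hr + 2⁻¹ * M b b * he

theorem quantum_bound_N_party_attained (N : ℕ) [NeZero N] (hN : 2 ≤ N)
    (A : ∀ _ : Fin N, Fin 2 → Matrix (Fin 2) (Fin 2) ℂ)
    (hAdef : A 0 = ![(Real.sqrt 2 : ℂ)⁻¹ • (PauliX + PauliZ),
                     (Real.sqrt 2 : ℂ)⁻¹ • (PauliX - PauliZ)])
    (hAdef' : ∀ n : Fin N, n ≠ 0 → A n = ![PauliZ, PauliX])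
    (a : Fin N → Fin 2) :
    star (ghz a) ⬝ᵥ (NBell (d := fun _ => 2) A a) *ᵥ ghz a = 2 * ((N : ℂ) - 1) := by
  rw [quad]
  set b : Fin N → Fin 2 := fun n => a n + 1 with hb
  set e : ℂ := (-1:ℂ)^((a 0 : ℕ)) with hedef
  -- the first Kronecker factor family is constantly X
  have hupd1 : Function.update (fun n : Fin N => A n 1) 0 (tildeA (A 0) 1)
      = fun _ : Fin N => PauliX := by
    funext m
    rcases eq_or_ne m 0 with h | h
    · subst h; rw [Function.update_self, tildeA1 _ hAdef]
    · rw [Function.update_of_ne h, hAdef' m h]; rfl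
  -- entries of the first Kronecker product
  have hK1aa : famKron (fun _ : Fin N => PauliX) a a = 0 := by
    show (∏ n, PauliX (a n) (a n)) = 0
    exact Finset.prod_eq_zero (Finset.mem_univ 0) (hX_diag _)
  have hK1bb : famKron (fun _ : Fin N => PauliX) b b = 0 := by
    show (∏ n, PauliX (b n) (b n)) = 0
    exact Finset.prod_eq_zero (Finset.mem_univ 0) (hX_diag _)
  have hK1ab : famKron (fun _ : Fin N => PauliX) a b = 1 := by
    show (∏ n, PauliX (a n) (b n)) = 1
    exact Finset.prod_eq_one fun n _ => hX_off (a n)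
  have hK1ba : famKron (fun _ : Fin N => PauliX) b a = 1 := by
    show (∏ n, PauliX (b n) (a n)) = 1
    exact Finset.prod_eq_one fun n _ => hX_off' (a n)
  -- the second family
  set G : Fin N → ∀ m : Fin N, Matrix (Fin 2) (Fin 2) ℂ := fun n =>
    Function.update (Function.update (fun _ : Fin N => (1 : Matrix (Fin 2) (Fin 2) ℂ))
      0 (tildeA (A 0) 0)) n (A n 0) with hG
  have hG0 : ∀ n : Fin N, n ≠ 0 → G n 0 = PauliZ := by
    intro n hn
    rw [hG]
    simp only []
    rw [Function.update_of_ne (Ne.symm hn), Function.update_self, tildeA0 _ hAdef]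
  have hGn : ∀ n : Fin N, n ≠ 0 → G n n = PauliZ := by
    intro n hn
    rw [hG]
    simp only []
    rw [Function.update_self, hAdef' n hn]; rfl
  have hGm : ∀ n m : Fin N, m ≠ 0 → m ≠ n → G n m = 1 := by
    intro n m hm0 hmn
    rw [hG]
    simp only []
    rw [Function.update_of_ne hmn, Function.update_of_ne hm0]
  -- entries of the n-th Kronecker product
  have hKnaa : ∀ n : Fin N, n ≠ 0 →
      famKron (G n) a a = e * (-1:ℂ)^((a n : ℕ)) := by
    intro n hn
    have hsub : ({0, n} : Finset (Fin N)) ⊆ Finset.univ := Finset.subset_univ _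
    have : famKron (G n) a a = ∏ m ∈ ({0, n} : Finset (Fin N)), G n m (a m) (a m) := by
      refine (Finset.prod_subset hsub ?_).symm
      intro m _ hm
      simp only [Finset.mem_insert, Finset.mem_singleton, not_or] at hm
      rw [hGm n m hm.1 hm.2, Matrix.one_apply_eq]
    rw [this, Finset.prod_pair (Ne.symm hn), hG0 n hn, hGn n hn, hZ_diag, hZ_diag]
  have hKnbb : ∀ n : Fin N, n ≠ 0 →
      famKron (G n) b b = e * (-1:ℂ)^((a n : ℕ)) := by
    intro n hn
    have hsub : ({0, n} : Finset (Fin N)) ⊆ Finset.univ := Finset.subset_univ _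
    have : famKron (G n) b b = ∏ m ∈ ({0, n} : Finset (Fin N)), G n m (b m) (b m) := by
      refine (Finset.prod_subset hsub ?_).symm
      intro m _ hm
      simp only [Finset.mem_insert, Finset.mem_singleton, not_or] at hm
      rw [hGm n m hm.1 hm.2, Matrix.one_apply_eq]
    rw [this, Finset.prod_pair (Ne.symm hn), hG0 n hn, hGn n hn]
    show PauliZ (a 0 + 1) (a 0 + 1) * PauliZ (a n + 1) (a n + 1) = _
    rw [hZ_diag', hZ_diag']; ring
  have hKnab : ∀ n : Fin N, n ≠ 0 → famKron (G n) a b = 0 := by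
    intro n hn
    show (∏ m, G n m (a m) (b m)) = 0
    refine Finset.prod_eq_zero (Finset.mem_univ 0) ?_
    rw [hG0 n hn]
    exact hZ_off (a 0)
  have hKnba : ∀ n : Fin N, n ≠ 0 → famKron (G n) b a = 0 := by
    intro n hn
    show (∏ m, G n m (b m) (a m)) = 0
    refine Finset.prod_eq_zero (Finset.mem_univ 0) ?_
    rw [hG0 n hn]
    exact hZ_off' (a 0)
  -- cardinality of erase 0
  have hcard : (Finset.univ.erase (0 : Fin N)).card = N - 1 := by
    rw [Finset.card_erase_of_mem (Finset.mem_univ 0), Finset.card_univ, Fintype.card_fin]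
  have hcast : ((N - 1 : ℕ) : ℂ) = (N : ℂ) - 1 := by
    have : 1 ≤ N := Nat.one_le_iff_ne_zero.mpr (NeZero.ne N)
    push_cast [Nat.cast_sub this]; ring
  -- the four entries of NBell
  simp only [NBell, Matrix.smul_apply, Matrix.add_apply, Matrix.sum_apply, smul_eq_mul,
    hupd1, ← hedef, ← hb]
  rw [hK1aa, hK1ab, hK1ba, hK1bb]
  have hsum_aa : ∑ n ∈ Finset.univ.erase (0 : Fin N),
      (-1:ℂ)^((a n : ℕ)) * famKron (G n) a a = ((N : ℂ) - 1) * e := by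
    calc ∑ n ∈ Finset.univ.erase (0 : Fin N), (-1:ℂ)^((a n : ℕ)) * famKron (G n) a a
        = ∑ _n ∈ Finset.univ.erase (0 : Fin N), e := by
          refine Finset.sum_congr rfl fun n hn => ?_
          rw [hKnaa n (Finset.mem_erase.mp hn).1]
          linear_combination e * neg_one_pow_fin_sq (a n)
      _ = ((N : ℂ) - 1) * e := by
          rw [Finset.sum_const, hcard, nsmul_eq_mul, hcast]
  have hsum_bb : ∑ n ∈ Finset.univ.erase (0 : Fin N),
      (-1:ℂ)^((a n : ℕ)) * famKron (G n) b b = ((N : ℂ) - 1) * e := by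
    calc ∑ n ∈ Finset.univ.erase (0 : Fin N), (-1:ℂ)^((a n : ℕ)) * famKron (G n) b b
        = ∑ _n ∈ Finset.univ.erase (0 : Fin N), e := by
          refine Finset.sum_congr rfl fun n hn => ?_
          rw [hKnbb n (Finset.mem_erase.mp hn).1]
          linear_combination e * neg_one_pow_fin_sq (a n)
      _ = ((N : ℂ) - 1) * e := by
          rw [Finset.sum_const, hcard, nsmul_eq_mul, hcast]
  have hsum_ab : ∑ n ∈ Finset.univ.erase (0 : Fin N),
      (-1:ℂ)^((a n : ℕ)) * famKron (G n) a b = 0 := by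
    refine Finset.sum_eq_zero fun n hn => ?_
    rw [hKnab n (Finset.mem_erase.mp hn).1, mul_zero]
  have hsum_ba : ∑ n ∈ Finset.univ.erase (0 : Fin N),
      (-1:ℂ)^((a n : ℕ)) * famKron (G n) b a = 0 := by
    refine Finset.sum_eq_zero fun n hn => ?_
    rw [hKnba n (Finset.mem_erase.mp hn).1, mul_zero]
  rw [hsum_aa, hsum_bb, hsum_ab, hsum_ba]
  have he := neg_one_pow_fin_sq (a 0)
  rw [← hedef] at he
  linear_combination 2 * ((N:ℂ) - 1) * he

end
end

section
/- Classical bound of the N-party Bell expression: Let N ≥ 2. For all sign assignments ε_{n,x} ∈ {−1,1} (n = 1,…,N; x ∈ {0,1}) and every a ∈ {0,1}^N, one has (−1)^{a₁} [ (N−1) ((ε_{1,0}+ε_{1,1})/√2) Π_{n=2}^{N} ε_{n,1} + Σ_{n=2}^{N} (−1)^{a_n} ((ε_{1,0}−ε_{1,1})/√2) ε_{n,0} ] ≤ √2 (N−1), and the bound √2(N−1) is attained for some choice of signs. -/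
/-!
Classical bound of the N-party Bell expression: for deterministic ±1 assignments
`ε_{n,x}`, the Bell expression is at most `√2 (N−1)`, and this bound is attained.
-/

open Finset

theorem classical_bound_N_party (N : ℕ) [NeZero N] (hN : 2 ≤ N) (a : Fin N → Fin 2) :
    (∀ ε : Fin N → Fin 2 → ℝ,
        (∀ n x, ε n x = 1 ∨ ε n x = -1) →
        (-1 : ℝ) ^ (a 0 : ℕ) *
            (((N : ℝ) - 1) * ((ε 0 0 + ε 0 1) / Real.sqrt 2) *
                ∏ n ∈ Finset.univ.erase 0, ε n 1 +
              ∑ n ∈ Finset.univ.erase 0,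
                (-1 : ℝ) ^ (a n : ℕ) * ((ε 0 0 - ε 0 1) / Real.sqrt 2) * ε n 0)
          ≤ Real.sqrt 2 * ((N : ℝ) - 1)) ∧
    (∃ ε : Fin N → Fin 2 → ℝ,
        (∀ n x, ε n x = 1 ∨ ε n x = -1) ∧
        (-1 : ℝ) ^ (a 0 : ℕ) *
            (((N : ℝ) - 1) * ((ε 0 0 + ε 0 1) / Real.sqrt 2) *
                ∏ n ∈ Finset.univ.erase 0, ε n 1 +
              ∑ n ∈ Finset.univ.erase 0,
                (-1 : ℝ) ^ (a n : ℕ) * ((ε 0 0 - ε 0 1) / Real.sqrt 2) * ε n 0)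
          = Real.sqrt 2 * ((N : ℝ) - 1)) := by
  have hs2 : Real.sqrt 2 * Real.sqrt 2 = 2 := Real.mul_self_sqrt (by norm_num)
  have hs2pos : (0:ℝ) < Real.sqrt 2 := Real.sqrt_pos.mpr (by norm_num)
  have h2div : (2:ℝ) / Real.sqrt 2 = Real.sqrt 2 := by
    rw [eq_comm, eq_div_iff (ne_of_gt hs2pos)]; exact hs2
  have hcard : ((Finset.univ.erase (0 : Fin N)).card : ℝ) = (N:ℝ) - 1 := by
    rw [Finset.card_erase_of_mem (Finset.mem_univ _), Finset.card_univ, Fintype.card_fin]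
    have h1 : 1 ≤ N := le_trans (by norm_num) hN
    push_cast [Nat.cast_sub h1]; ring
  have hN1 : (0:ℝ) ≤ (N:ℝ) - 1 := by
    have : (2:ℝ) ≤ (N:ℝ) := by exact_mod_cast hN
    linarith
  have hsignabs : ∀ k : ℕ, |(-1:ℝ)^k| = 1 := fun k => by
    rw [abs_pow, abs_neg, abs_one, one_pow]
  constructor
  · intro ε hε
    have habs : ∀ n x, |ε n x| = 1 := fun n x => by
      rcases hε n x with h | h <;> simp [h]
    have hP : |∏ n ∈ Finset.univ.erase (0:Fin N), ε n 1| = 1 := by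
      rw [Finset.abs_prod]
      exact Finset.prod_eq_one fun i _ => habs i 1
    have hsd : (ε 0 0 + ε 0 1) * (ε 0 0 - ε 0 1) = 0 := by
      have h1 : ε 0 0 * ε 0 0 = 1 := by rcases hε 0 0 with h | h <;> rw [h] <;> ring
      have h2 : ε 0 1 * ε 0 1 = 1 := by rcases hε 0 1 with h | h <;> rw [h] <;> ring
      nlinarith
    set T1 : ℝ := ((N : ℝ) - 1) * ((ε 0 0 + ε 0 1) / Real.sqrt 2) *
        ∏ n ∈ Finset.univ.erase (0:Fin N), ε n 1 with hT1
    set T2 : ℝ := ∑ n ∈ Finset.univ.erase (0:Fin N),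
        (-1 : ℝ) ^ (a n : ℕ) * ((ε 0 0 - ε 0 1) / Real.sqrt 2) * ε n 0 with hT2
    have step : (-1 : ℝ) ^ (a 0 : ℕ) * (T1 + T2) ≤ |T1| + |T2| := by
      calc (-1 : ℝ) ^ (a 0 : ℕ) * (T1 + T2) ≤ |(-1 : ℝ) ^ (a 0 : ℕ) * (T1 + T2)| :=
            le_abs_self _
        _ = |T1 + T2| := by rw [abs_mul, hsignabs, one_mul]
        _ ≤ |T1| + |T2| := abs_add_le _ _
    refine le_trans step ?_
    rcases mul_eq_zero.mp hsd with h | h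
    · -- sum ε00+ε01 = 0 : product term is 0
      have hT1z : T1 = 0 := by rw [hT1, h]; simp
      have hterm : ∀ n ∈ Finset.univ.erase (0:Fin N),
          |(-1 : ℝ) ^ (a n : ℕ) * ((ε 0 0 - ε 0 1) / Real.sqrt 2) * ε n 0| ≤ Real.sqrt 2 := by
        intro n _
        rw [abs_mul, abs_mul, hsignabs, one_mul, habs, mul_one, abs_div,
          abs_of_pos hs2pos, div_le_iff₀ hs2pos, hs2]
        calc |ε 0 0 - ε 0 1| ≤ |ε 0 0| + |ε 0 1| := abs_sub _ _
          _ = 2 := by rw [habs, habs]; norm_num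
      have hT2b : |T2| ≤ Real.sqrt 2 * ((N:ℝ) - 1) := by
        calc |T2| ≤ ∑ n ∈ Finset.univ.erase (0:Fin N),
              |(-1 : ℝ) ^ (a n : ℕ) * ((ε 0 0 - ε 0 1) / Real.sqrt 2) * ε n 0| :=
            Finset.abs_sum_le_sum_abs _ _
          _ ≤ ∑ _n ∈ Finset.univ.erase (0:Fin N), Real.sqrt 2 :=
            Finset.sum_le_sum hterm
          _ = ((Finset.univ.erase (0:Fin N)).card : ℝ) * Real.sqrt 2 := by
            rw [Finset.sum_const, nsmul_eq_mul]
          _ = Real.sqrt 2 * ((N:ℝ) - 1) := by rw [hcard]; ring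
      rw [hT1z, abs_zero, zero_add]
      exact hT2b
    · -- difference ε00−ε01 = 0 : sum term is 0
      have hT2z : T2 = 0 := by
        rw [hT2]
        refine Finset.sum_eq_zero fun n _ => ?_
        rw [h]; simp
      have hT1b : |T1| ≤ Real.sqrt 2 * ((N:ℝ) - 1) := by
        rw [hT1, abs_mul, abs_mul, hP, mul_one, abs_div, abs_of_pos hs2pos,
          abs_of_nonneg hN1]
        have hdivb : |ε 0 0 + ε 0 1| / Real.sqrt 2 ≤ Real.sqrt 2 := by
          rw [div_le_iff₀ hs2pos, hs2]
          calc |ε 0 0 + ε 0 1| ≤ |ε 0 0| + |ε 0 1| := abs_add_le _ _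
            _ = 2 := by rw [habs, habs]; norm_num
        calc ((N:ℝ) - 1) * (|ε 0 0 + ε 0 1| / Real.sqrt 2)
            ≤ ((N:ℝ) - 1) * Real.sqrt 2 := mul_le_mul_of_nonneg_left hdivb hN1
          _ = Real.sqrt 2 * ((N:ℝ) - 1) := by ring
      rw [hT2z, abs_zero, add_zero]
      exact hT1b
  · set c : ℝ := (-1:ℝ)^(a 0 : ℕ) with hc
    have hsq : c * c = 1 := by
      rw [hc, ← pow_add]
      exact Even.neg_one_pow ⟨(a 0 : ℕ), rfl⟩
    refine ⟨fun n _x => if n = 0 then c else 1, fun n x => ?_, ?_⟩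
    · by_cases h : n = 0
      · simp only [h, if_pos rfl, hc]
        rcases Nat.even_or_odd (a 0 : ℕ) with he | ho
        · left; exact he.neg_one_pow
        · right; exact ho.neg_one_pow
      · left; simp [h]
    · simp only [if_pos rfl, if_true]
      have hprod : (∏ n ∈ Finset.univ.erase (0:Fin N),
          (if n = (0:Fin N) then c else 1)) = 1 :=
        Finset.prod_eq_one fun n hn => if_neg (Finset.ne_of_mem_erase hn)
      have hsum : (∑ n ∈ Finset.univ.erase (0:Fin N),
          (-1 : ℝ) ^ (a n : ℕ) * ((c - c) / Real.sqrt 2) *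
            (if n = (0:Fin N) then c else 1)) = 0 :=
        Finset.sum_eq_zero fun n _ => by simp
      rw [hprod, hsum]
      calc c * (((N:ℝ) - 1) * ((c + c) / Real.sqrt 2) * 1 + 0)
          = (c * c) * (((N:ℝ) - 1) * (2 / Real.sqrt 2)) := by ring
        _ = Real.sqrt 2 * ((N:ℝ) - 1) := by rw [hsq, h2div]; ring
end

section
/- The reference interaction reproduces the extra statistics (N parties): let N ≥ 2, |e⟩ = sin(π/8)|0⟩ + cos(π/8)|1⟩ (the +1 eigenvector of (X−Z)/√2), |+⟩ = (|0⟩+|1⟩)/√2, and ψ = 𝒰_N (|e⟩ ⊗ |+⟩ ⊗ |0⟩^{⊗(N−2)}) ∈ (ℂ²)^{⊗N}. Then ⟨ψ| Z^{(1)} |ψ⟩ = −1 and ⟨ψ| X^{(n)} |ψ⟩ = 1 for every n = 2,…,N. -/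
/-! The reference interaction reproduces the extra statistics (N parties): for `ψ = 𝒰_N (|e⟩ ⊗ |+⟩ ⊗ |0⟩^{⊗(N−2)})` one has `⟨ψ| Z⁽¹⁾ |ψ⟩ = −1` and `⟨ψ| X⁽ⁿ⁾ |ψ⟩ = 1` for `n = 2, …, N`. -/

open Matrix Finset
open scoped Matrix Kronecker ComplexOrder

noncomputable section

/-- Computational basis vector `|a⟩` of `ℂ²`. -/
def ketF (a : Fin 2) : Fin 2 → ℂ := fun i => if i = a then 1 else 0

/-- `|0̄⟩ = cos(π/8)|0⟩ + sin(π/8)|1⟩` and `|1̄⟩ = −sin(π/8)|0⟩ + cos(π/8)|1⟩`,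
the eigenvectors of `(X+Z)/√2`. -/
def barKet : Fin 2 → Fin 2 → ℂ :=
  ![![(Real.cos (Real.pi / 8) : ℂ), (Real.sin (Real.pi / 8) : ℂ)],
    ![-(Real.sin (Real.pi / 8) : ℂ), (Real.cos (Real.pi / 8) : ℂ)]]

/-- `|0ˣ⟩ = (|0⟩+|1⟩)/√2` and `|1ˣ⟩ = (|0⟩−|1⟩)/√2`, the eigenvectors of `X`. -/
def xKet : Fin 2 → Fin 2 → ℂ := fun a i =>
  (Real.sqrt 2 : ℂ)⁻¹ * (-1 : ℂ) ^ ((a : ℕ) * (i : ℕ))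

/-- The single-site basis used for the `n`-th tensor factor of the product basis
`|ā₁⟩ ⊗ |a₂⟩ ⊗ |a₃ˣ⟩ ⊗ ⋯ ⊗ |a_Nˣ⟩`. -/
def siteKet {N : ℕ} [NeZero N] (n : Fin N) : Fin 2 → Fin 2 → ℂ :=
  if n = 0 then barKet else if n = 1 then ketF else xKet

/-- The product vector `|ā₁⟩ ⊗ |a₂⟩ ⊗ |a₃ˣ⟩ ⊗ ⋯ ⊗ |a_Nˣ⟩`. -/
def prodKet {N : ℕ} [NeZero N] (a : Fin N → Fin 2) : (Fin N → Fin 2) → ℂ := fun s =>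
  ∏ n, siteKet n (a n) (s n)

/-- The reference interaction `𝒰_N = Σ_a |φ_a⟩⟨ā₁, a₂, a₃ˣ, …, a_Nˣ|`. -/
def UmatN (N : ℕ) [NeZero N] : Matrix (Fin N → Fin 2) (Fin N → Fin 2) ℂ :=
  ∑ a : Fin N → Fin 2, vecMulVec (ghz a) (star (prodKet a))

/-- `|e⟩ = sin(π/8)|0⟩ + cos(π/8)|1⟩`, the `+1` eigenvector of `(X−Z)/√2`. -/
def eKet : Fin 2 → ℂ := ![(Real.sin (Real.pi / 8) : ℂ), (Real.cos (Real.pi / 8) : ℂ)]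

/-- `|+⟩ = (|0⟩+|1⟩)/√2`. -/
def plusKet : Fin 2 → ℂ := fun _ => (Real.sqrt 2 : ℂ)⁻¹

/-- The product vector `|e⟩ ⊗ |+⟩ ⊗ |0⟩^{⊗(N−2)}`. -/
def pKet (N : ℕ) [NeZero N] : (Fin N → Fin 2) → ℂ := fun s =>
  ∏ n, (if n = 0 then eKet else if n = 1 then plusKet else ketF 0) (s n)

/-- `M^{(n)}`: the qubit operator `M` acting on the `n`-th factor of `(ℂ²)^{⊗N}`. -/
def qAt {N : ℕ} (n : Fin N) (M : Matrix (Fin 2) (Fin 2) ℂ) :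
    Matrix (Fin N → Fin 2) (Fin N → Fin 2) ℂ :=
  famKron (Function.update (fun _ : Fin N => (1 : Matrix (Fin 2) (Fin 2) ℂ)) n M)

namespace RefAux

lemma fin2 (j : Fin 2) : j = 0 ∨ j = 1 := by omega

noncomputable def sq2i : ℂ := (Real.sqrt 2 : ℂ)⁻¹

lemma sqrt2_mul_self : (Real.sqrt 2) * Real.sqrt 2 = 2 :=
  Real.mul_self_sqrt (by norm_num)

lemma sq2i_mul_self : sq2i * sq2i = 2⁻¹ := by
  rw [sq2i, ← mul_inv, ← Complex.ofReal_mul, sqrt2_mul_self]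
  norm_num

lemma conj_sq2i : (starRingEnd ℂ) sq2i = sq2i := by
  simp [sq2i, map_inv₀, Complex.conj_ofReal]

lemma inv_sqrt2 : (Real.sqrt 2)⁻¹ = Real.sqrt 2 / 2 := by
  rw [inv_eq_one_div, div_eq_div_iff (by positivity) (by norm_num)]
  linarith [sqrt2_mul_self]

lemma bar_overlap (j : Fin 2) : ∑ i, barKet j i * eKet i = sq2i := by
  have hs := Real.sin_two_mul (Real.pi / 8)
  have hc := Real.cos_two_mul (Real.pi / 8)
  have hpyth := Real.sin_sq_add_cos_sq (Real.pi / 8)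
  rw [show 2 * (Real.pi / 8) = Real.pi / 4 by ring] at hs hc
  rw [Real.sin_pi_div_four] at hs
  rw [Real.cos_pi_div_four] at hc
  rcases fin2 j with h | h <;> subst h <;>
    simp only [barKet, eKet, Fin.sum_univ_two, Matrix.cons_val_zero, Matrix.cons_val_one,
      Matrix.head_cons, sq2i] <;> norm_cast <;> rw [inv_sqrt2] <;> nlinarith [hs, hc, hpyth]

lemma ket_overlap (j : Fin 2) : ∑ i, ketF j i * plusKet i = sq2i := by
  rcases fin2 j with h | h <;> subst h <;>
    simp [Fin.sum_univ_two, ketF, plusKet, sq2i]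

lemma x_overlap (j : Fin 2) : ∑ i, xKet j i * ketF 0 i = sq2i := by
  simp [Fin.sum_univ_two, xKet, ketF, sq2i]

lemma siteKet_conj {N : ℕ} [NeZero N] (n : Fin N) (j i : Fin 2) :
    (starRingEnd ℂ) (siteKet n j i) = siteKet n j i := by
  unfold siteKet
  split_ifs
  · rcases fin2 j with h | h <;> rcases fin2 i with h' | h' <;> subst h <;> subst h' <;>
      simp [barKet, Complex.conj_ofReal, map_div₀, map_ofNat, map_neg]
  · unfold ketF; split_ifs <;> simp
  · simp [xKet, _root_.map_mul, map_inv₀, map_pow, Complex.conj_ofReal, map_ofNat]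

lemma overlap {N : ℕ} [NeZero N] (a : Fin N → Fin 2) :
    ∑ t : Fin N → Fin 2, prodKet a t * pKet N t = sq2i ^ N := by
  unfold prodKet pKet
  have key : ∀ n : Fin N,
      (∑ j : Fin 2, siteKet n (a n) j *
        (if n = 0 then eKet else if n = 1 then plusKet else ketF 0) j) = sq2i := by
    intro n
    by_cases h0 : n = 0
    · subst h0
      simp only [siteKet, if_pos rfl]
      exact bar_overlap (a 0)
    · by_cases h1 : n = 1
      · subst h1
        simp only [siteKet, if_neg h0, if_pos rfl]
        exact ket_overlap (a 1)
      · simp only [siteKet, if_neg h0, if_neg h1]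
        exact x_overlap (a n)
  have hF := Fintype.prod_sum (fun (n : Fin N) (j : Fin 2) => siteKet n (a n) j *
      (if n = 0 then eKet else if n = 1 then plusKet else ketF 0) j)
  calc ∑ t : Fin N → Fin 2, (∏ n, siteKet n (a n) (t n)) *
          ∏ n, (if n = 0 then eKet else if n = 1 then plusKet else ketF 0) (t n)
      = ∑ t : Fin N → Fin 2, ∏ n, (siteKet n (a n) (t n) *
          (if n = 0 then eKet else if n = 1 then plusKet else ketF 0) (t n)) :=
        Finset.sum_congr rfl fun t _ => (Finset.prod_mul_distrib).symm
    _ = ∏ n : Fin N, ∑ j : Fin 2, (siteKet n (a n) j *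
          (if n = 0 then eKet else if n = 1 then plusKet else ketF 0) j) := hF.symm
    _ = ∏ _n : Fin N, sq2i := Finset.prod_congr rfl fun n _ => key n
    _ = sq2i ^ N := by rw [Finset.prod_const, Finset.card_univ, Fintype.card_fin]

lemma sum_ghz {N : ℕ} [NeZero N] (s : Fin N → Fin 2) :
    ∑ a : Fin N → Fin 2, ghz a s = if s 0 = 1 then 2 * sq2i else 0 := by
  have flip : ∀ x y : Fin 2, (x = y + 1) ↔ (y = x + 1) := by decide
  unfold ghz
  rw [← sq2i, ← Finset.mul_sum]
  have h1 : ∑ a : Fin N → Fin 2,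
      ((if s = a then (1:ℂ) else 0) +
        (-1 : ℂ) ^ ((a 0 : ℕ)) * (if s = (fun n => a n + 1) then 1 else 0)) =
      1 + (-1 : ℂ) ^ (((s 0 + 1 : Fin 2)) : ℕ) := by
    rw [Finset.sum_add_distrib]
    congr 1
    · rw [Finset.sum_ite_eq univ s (fun _ => (1:ℂ))]
      simp
    · have : ∀ a : Fin N → Fin 2,
          (-1 : ℂ) ^ ((a 0 : ℕ)) * (if s = (fun n => a n + 1) then 1 else 0) =
          (if a = (fun n => s n + 1) then (-1 : ℂ) ^ ((a 0 : ℕ)) else 0) := by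
        intro a
        have he : (s = fun n => a n + 1) ↔ (a = fun n => s n + 1) := by
          constructor <;> intro h <;> funext n <;> have := congrFun h n
          · exact (flip _ _).mp this
          · exact (flip _ _).mp this
        rw [mul_ite, mul_one, mul_zero]
        by_cases h : s = fun n => a n + 1
        · rw [if_pos h, if_pos (he.mp h)]
        · rw [if_neg h, if_neg (fun hh => h (he.mpr hh))]
      rw [Finset.sum_congr rfl fun a _ => this a,
        Finset.sum_ite_eq' univ (fun n => s n + 1) (fun a => (-1:ℂ) ^ ((a 0 : ℕ)))]
      simp
  rw [h1]
  rcases fin2 (s 0) with h | h <;> rw [h]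
  · rw [if_neg (by decide), show ((0 : Fin 2) + 1) = 1 from rfl]
    norm_num
  · rw [if_pos rfl, show ((1 : Fin 2) + 1) = 0 from rfl]
    norm_num
    ring

noncomputable def kC (N : ℕ) : ℂ := 2 * sq2i ^ (N + 1)

noncomputable def psiF (N : ℕ) [NeZero N] : (Fin N → Fin 2) → ℂ :=
  fun s => if s 0 = 1 then kC N else 0

lemma psi_eq (N : ℕ) [NeZero N] : UmatN N *ᵥ pKet N = psiF N := by
  funext s
  have hst : ∀ (a : Fin N → Fin 2) (t : Fin N → Fin 2),
      star (prodKet a t) = prodKet a t := by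
    intro a t
    rw [Complex.star_def]
    unfold prodKet
    rw [map_prod]
    exact Finset.prod_congr rfl fun n _ => siteKet_conj n (a n) (t n)
  simp only [UmatN, mulVec, dotProduct, Matrix.sum_apply, vecMulVec_apply, Pi.star_apply,
    Finset.sum_mul]
  rw [Finset.sum_comm]
  calc ∑ a : Fin N → Fin 2, ∑ t : Fin N → Fin 2,
        ghz a s * star (prodKet a t) * pKet N t
      = ∑ a : Fin N → Fin 2, ghz a s * ∑ t : Fin N → Fin 2, prodKet a t * pKet N t := by
        refine Finset.sum_congr rfl fun a _ => ?_
        rw [Finset.mul_sum]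
        exact Finset.sum_congr rfl fun t _ => by rw [hst, mul_assoc]
    _ = ∑ a : Fin N → Fin 2, ghz a s * sq2i ^ N :=
        Finset.sum_congr rfl fun a _ => by rw [overlap]
    _ = (∑ a : Fin N → Fin 2, ghz a s) * sq2i ^ N := (Finset.sum_mul _ _ _).symm
    _ = psiF N s := by
        rw [sum_ghz]
        unfold psiF kC
        split_ifs
        · rw [pow_succ]; ring
        · rw [zero_mul]

lemma qAt_Z (N : ℕ) [NeZero N] : qAt (0 : Fin N) PauliZ *ᵥ psiF N = -psiF N := by
  funext s
  simp only [qAt, famKron, mulVec, dotProduct, Matrix.of_apply, Pi.neg_apply]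
  rw [Finset.sum_eq_single s]
  · rw [Finset.prod_eq_single (0 : Fin N)]
    · rw [Function.update_self]
      rcases fin2 (s 0) with h | h <;> simp [psiF, h, PauliZ]
    · intro m _ hm
      rw [Function.update_of_ne hm, Matrix.one_apply_eq]
    · intro h; exact absurd (Finset.mem_univ _) h
  · intro t _ hts
    by_cases hv : psiF N t = 0
    · rw [hv, mul_zero]
    · have ht0 : t 0 = 1 := by
        by_contra h
        exact hv (if_neg h)
      obtain ⟨m, hm⟩ := Function.ne_iff.mp hts
      apply mul_eq_zero_of_left
      apply Finset.prod_eq_zero (Finset.mem_univ m)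
      by_cases hm0 : m = 0
      · subst hm0
        rw [Function.update_self]
        have hs0 : s 0 = 0 := by
          rcases fin2 (s 0) with h | h
          · exact h
          · exact absurd (ht0.trans h.symm) hm
        rw [hs0, ht0]
        simp [PauliZ]
      · rw [Function.update_of_ne hm0]
        exact Matrix.one_apply_ne (Ne.symm hm)
  · intro h; exact absurd (Finset.mem_univ _) h

lemma qAt_X (N : ℕ) [NeZero N] (n : Fin N) (hn : n ≠ 0) :
    qAt n PauliX *ᵥ psiF N = psiF N := by
  have flip : ∀ x y : Fin 2, x ≠ y + 1 → x = y := by decide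
  funext s
  simp only [qAt, famKron, mulVec, dotProduct, Matrix.of_apply]
  rw [Finset.sum_eq_single (Function.update s n (s n + 1))]
  · have h1 : (∏ m, (Function.update (fun _ : Fin N => (1 : Matrix (Fin 2) (Fin 2) ℂ)) n PauliX)
        m (s m) (Function.update s n (s n + 1) m)) = 1 := by
      apply Finset.prod_eq_one
      intro m _
      by_cases hm : m = n
      · subst hm
        rw [Function.update_self, Function.update_self]
        rcases fin2 (s m) with h | h <;> rw [h] <;> simp [PauliX]
      · rw [Function.update_of_ne hm, Function.update_of_ne hm, Matrix.one_apply_eq]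
    rw [h1, one_mul]
    unfold psiF
    rw [Function.update_of_ne (Ne.symm hn)]
  · intro t _ hts
    obtain ⟨m, hm⟩ := Function.ne_iff.mp hts
    apply mul_eq_zero_of_left
    apply Finset.prod_eq_zero (Finset.mem_univ m)
    by_cases hmn : m = n
    · subst hmn
      rw [Function.update_self]
      have h2 : t m ≠ s m + 1 := by
        simpa [Function.update_self] using hm
      rw [flip _ _ h2]
      rcases fin2 (s m) with h | h <;> rw [h] <;> simp [PauliX]
    · rw [Function.update_of_ne hmn]
      have hne : s m ≠ t m := by
        intro h
        exact hm (by rw [Function.update_of_ne hmn, h])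
      exact Matrix.one_apply_ne hne
  · intro h; exact absurd (Finset.mem_univ _) h

lemma conj_kC (N : ℕ) : (starRingEnd ℂ) (kC N) = kC N := by
  simp [kC, _root_.map_mul, map_pow, conj_sq2i, map_ofNat]

lemma kC_sq (N : ℕ) (hN : 2 ≤ N) : kC N * kC N * 2 ^ (N - 1) = 1 := by
  have h1 : kC N * kC N = 4 * ((2 : ℂ)⁻¹) ^ (N + 1) := by
    calc kC N * kC N = 4 * (sq2i * sq2i) ^ (N + 1) := by rw [kC, mul_pow]; ring
      _ = 4 * ((2 : ℂ)⁻¹) ^ (N + 1) := by rw [sq2i_mul_self]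
  obtain ⟨k, hk⟩ : ∃ k, N = k + 2 := ⟨N - 2, by omega⟩
  subst hk
  rw [h1]
  have hne : ((2 : ℂ)) ^ (k + 2 + 1) ≠ 0 := by positivity
  rw [inv_pow, show k + 2 - 1 = k + 1 from rfl]
  field_simp
  rw [pow_add, pow_add, pow_add]
  ring

lemma norm_psi (N : ℕ) [NeZero N] (hN : 2 ≤ N) : star (psiF N) ⬝ᵥ psiF N = 1 := by
  simp only [dotProduct, Pi.star_apply, Complex.star_def]
  have hpt : ∀ s : Fin N → Fin 2,
      (starRingEnd ℂ) (psiF N s) * psiF N s =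
      ∏ m : Fin N, (if m = 0 then (if s m = 1 then kC N * kC N else 0) else 1) := by
    intro s
    rw [Finset.prod_eq_single (0 : Fin N)]
    · unfold psiF
      by_cases h : s 0 = 1 <;> simp [h, conj_kC]
    · intro m _ hm; rw [if_neg hm]
    · intro h; exact absurd (Finset.mem_univ _) h
  have hF := Fintype.prod_sum (fun (m : Fin N) (j : Fin 2) =>
    if m = 0 then (if j = 1 then kC N * kC N else 0) else (1 : ℂ))
  rw [Finset.sum_congr rfl fun s _ => hpt s, ← hF]
  have hsum : ∀ m : Fin N,
      (∑ j : Fin 2, if m = 0 then (if j = 1 then kC N * kC N else 0) else 1) =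
      if m = 0 then kC N * kC N else 2 := by
    intro m
    by_cases hm : m = 0 <;> simp [hm, Fin.sum_univ_two]
  rw [Finset.prod_congr rfl fun m _ => hsum m,
    ← Finset.mul_prod_erase univ _ (Finset.mem_univ (0 : Fin N)), if_pos rfl]
  have herase : (∏ m ∈ univ.erase (0 : Fin N), if m = 0 then kC N * kC N else 2) =
      (2 : ℂ) ^ (N - 1) := by
    rw [Finset.prod_congr rfl fun m hm => if_neg (Finset.ne_of_mem_erase hm),
      Finset.prod_const, Finset.card_erase_of_mem (Finset.mem_univ _), Finset.card_univ,
      Fintype.card_fin]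
  rw [herase]
  exact kC_sq N hN

end RefAux

open RefAux in
theorem reference_interaction_extra_statistics_N_party (N : ℕ) [NeZero N] (hN : 2 ≤ N) :
    star (UmatN N *ᵥ pKet N) ⬝ᵥ
        ((qAt (0 : Fin N) PauliZ) *ᵥ (UmatN N *ᵥ pKet N)) = -1 ∧
    ∀ n : Fin N, n ≠ 0 →
      star (UmatN N *ᵥ pKet N) ⬝ᵥ ((qAt n PauliX) *ᵥ (UmatN N *ᵥ pKet N)) = 1 := by
  rw [psi_eq]
  constructor
  · rw [qAt_Z N, dotProduct_neg, norm_psi N hN]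
  · intro n hn
    rw [qAt_X N n hn, norm_psi N hN]

end
end
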